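/- arXiv:2602.01042 — 14 statements merged into one kernel-verified Lean document; each statement's English description precedes it below -/
import Mathlib

section
/- For the base Rubinstein-type function g on k² variables, every input x with g(x)=0 has sensitivity at most 1: there is at most one index i such that g(x ⊕ e_i) = 1. -/
section Defs
variable {I : Type*} [Fintype I] [DecidableEq I]

/-- Flip a single bit of the input. -/
def flipOne (i : I) (x : I → Bool) : I → Bool := Function.update x i (!x i)

/-- Flip all bits in the block `B`. -/
def flipSet (B : Finset I) (x : I → Bool) : I → Bool := fun j => if j ∈ B then !x j else x j

/-- Sensitivity of `f` at `x`: the number of coordinates whose flip changes the value. -/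
def sensAt (f : (I → Bool) → Bool) (x : I → Bool) : ℕ :=
  (Finset.univ.filter fun i => f (flipOne i x) ≠ f x).card

/-- Sensitivity of `f`. -/
noncomputable def sensF (f : (I → Bool) → Bool) : ℕ := sSup (Set.range (sensAt f))

/-- There exist `m` pairwise disjoint sensitive blocks for `f` at `x`. -/
def SensBlocks (f : (I → Bool) → Bool) (x : I → Bool) (m : ℕ) : Prop :=
  ∃ B : Fin m → Finset I, (∀ a b, a ≠ b → Disjoint (B a) (B b)) ∧
    ∀ a, f (flipSet (B a) x) ≠ f x

/-- Block sensitivity of `f`. -/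
noncomputable def bsF (f : (I → Bool) → Bool) : ℕ := sSup {m | ∃ x, SensBlocks f x m}

/-- `S` is a certificate for `f` at `x`. -/
def IsCert (f : (I → Bool) → Bool) (x : I → Bool) (S : Finset I) : Prop :=
  ∀ y, (∀ i ∈ S, y i = x i) → f y = f x

/-- Certificate complexity of `f` at `x`. -/
noncomputable def certAt (f : (I → Bool) → Bool) (x : I → Bool) : ℕ :=
  sInf {m | ∃ S : Finset I, IsCert f x S ∧ S.card = m}

/-- Certificate complexity of `f`. -/
noncomputable def certF (f : (I → Bool) → Bool) : ℕ := sSup (Set.range (certAt f))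

/-- Restrict `f` by the partial assignment `ρ`; the result is a function on the
free variables (those with `ρ i = none`). -/
def restrictTo (ρ : I → Option Bool) (f : (I → Bool) → Bool) :
    ({i : I // ρ i = none} → Bool) → Bool :=
  fun y => f fun i => if h : ρ i = none then y ⟨i, h⟩ else (ρ i).getD false

end Defs

/-- The base Rubinstein-type function on `k²` variables: value `1` iff exactly one aligned
contiguous block of `k` variables is all-`1` and all other variables are `0`. -/
def rub (k : ℕ) (x : Fin (k ^ 2) → Bool) : Bool :=
  decide (∃ j : Fin k, ∀ i : Fin (k ^ 2),
    (x i = true ↔ (j.val * k ≤ i.val ∧ i.val < j.val * k + k)))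

/-- The OR of `k²` disjoint copies of the base Rubinstein-type function. -/
def bigRub (k : ℕ) (x : Fin (k ^ 2) × Fin (k ^ 2) → Bool) : Bool :=
  decide (∃ c : Fin (k ^ 2), rub k (fun t => x (c, t)) = true)

/-- Deterministic single-bit decision trees. -/
inductive DTree (I : Type*) : Type _
  | leaf : Bool → DTree I
  | node : I → DTree I → DTree I → DTree I

namespace DTree
variable {I : Type*}

def eval : DTree I → (I → Bool) → Bool
  | leaf b, _ => b
  | node i t0 t1, x => bif x i then t1.eval x else t0.eval x

def depth : DTree I → ℕ
  | leaf _ => 0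
  | node _ t0 t1 => max t0.depth t1.depth + 1

/-- Maximum number of queries answered `0` on a root-to-leaf path. -/
def zeroDepth : DTree I → ℕ
  | leaf _ => 0
  | node _ t0 t1 => max (t0.zeroDepth + 1) t1.zeroDepth

end DTree

/-- AND-decision trees: each node queries the conjunction of a subset of variables. -/
inductive ADTree (I : Type*) : Type _
  | leaf : Bool → ADTree I
  | node : Finset I → ADTree I → ADTree I → ADTree I

namespace ADTree
variable {I : Type*}

def eval : ADTree I → (I → Bool) → Bool
  | leaf b, _ => b
  | node S t0 t1, x => if ∀ i ∈ S, x i = true then t1.eval x else t0.eval x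

def depth : ADTree I → ℕ
  | leaf _ => 0
  | node _ t0 t1 => max t0.depth t1.depth + 1

end ADTree

/-- The 0-query complexity: smallest 0-depth of a decision tree computing `f`. -/
noncomputable def zeroQuery {I : Type*} (f : (I → Bool) → Bool) : ℕ :=
  sInf {d | ∃ T : DTree I, (∀ x, T.eval x = f x) ∧ T.zeroDepth = d}

/-- The AND-query complexity: smallest depth of an AND-decision tree computing `f`. -/
noncomputable def andQuery {I : Type*} (f : (I → Bool) → Bool) : ℕ :=
  sInf {d | ∃ T : ADTree I, (∀ x, T.eval x = f x) ∧ T.depth = d}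

/-- `TRIBES_n`: the AND of `n` disjoint ORs of `n` variables each. -/
def tribes (n : ℕ) (x : Fin n × Fin n → Bool) : Bool :=
  decide (∀ i : Fin n, ∃ j : Fin n, x (i, j) = true)

/-- every 0-input of the base Rubinstein-type function has sensitivity at most 1. -/
theorem stmt1 (k : ℕ) (hk : 2 ≤ k) (x : Fin (k ^ 2) → Bool) (hx : rub k x = false) :
    sensAt (rub k) x ≤ 1 := by
  have hblt : ∀ (j : Fin k), j.val * k + k ≤ k ^ 2 := fun j => by
    calc j.val * k + k = (j.val + 1) * k := by ring
      _ ≤ k * k := Nat.mul_le_mul_right k j.isLt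
      _ = k ^ 2 := (sq k).symm
  rw [sensAt]
  apply Finset.card_le_one.mpr
  intro i hi i' hi'
  simp only [Finset.mem_filter, Finset.mem_univ, true_and, hx, ne_eq,
    Bool.not_eq_false] at hi hi'
  simp only [rub, decide_eq_true_eq] at hi hi'
  obtain ⟨j, hj⟩ := hi
  obtain ⟨j', hj'⟩ := hi'
  by_contra hne
  by_cases hjj : j = j'
  · subst hjj
    have h1 := hj i
    have h2 := hj' i
    rw [show flipOne i x i = !x i from Function.update_self i _ x] at h1
    rw [show flipOne i' x i = x i from Function.update_of_ne (by exact fun h => hne (h ▸ rfl)) _ x] at h2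
    rw [← h2] at h1
    cases x i <;> simp at h1
  · -- blocks disjoint
    have hjjv : j.val ≠ j'.val := fun h => hjj (Fin.ext h)
    have hdisj : j.val * k + k ≤ j'.val * k ∨ j'.val * k + k ≤ j.val * k := by
      rcases Nat.lt_or_ge j.val j'.val with h | h
      · left
        calc j.val * k + k = (j.val + 1) * k := by ring
          _ ≤ j'.val * k := Nat.mul_le_mul_right k h
      · right
        have h' : j'.val < j.val := lt_of_le_of_ne h (Ne.symm hjjv)
        calc j'.val * k + k = (j'.val + 1) * k := by ring
          _ ≤ j.val * k := Nat.mul_le_mul_right k h'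
    have key : ∀ t : Fin (k ^ 2), t ≠ i → t ≠ i' →
        ((j.val * k ≤ t.val ∧ t.val < j.val * k + k) ↔
         (j'.val * k ≤ t.val ∧ t.val < j'.val * k + k)) := by
      intro t ht ht'
      have h1 := hj t
      have h2 := hj' t
      rw [show flipOne i x t = x t from Function.update_of_ne ht _ x] at h1
      rw [show flipOne i' x t = x t from Function.update_of_ne ht' _ x] at h2
      rw [← h1, h2]
    -- four points
    have mk : ∀ (jj : Fin k) (m : ℕ), m < k → jj.val * k + m < k ^ 2 := by
      intro jj m hm
      have := hblt jj; omega
    have f1 : Fin (k ^ 2) := ⟨j.val * k, mk j 0 (by omega)⟩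
    have quad : ∀ m : ℕ, m < k →
        (j.val * k + m = i.val ∨ j.val * k + m = i'.val) := by
      intro m hm
      set t : Fin (k ^ 2) := ⟨j.val * k + m, mk j m hm⟩ with hts
      by_contra hc
      push_neg at hc
      have h := (key t (fun h => hc.1 (congrArg Fin.val h)) (fun h => hc.2 (congrArg Fin.val h))).mp
        ⟨by simp only [hts]; omega, by simp only [hts]; omega⟩
      simp only [hts] at h
      omega
    have quad' : ∀ m : ℕ, m < k →
        (j'.val * k + m = i.val ∨ j'.val * k + m = i'.val) := by
      intro m hm
      set t : Fin (k ^ 2) := ⟨j'.val * k + m, mk j' m hm⟩ with hts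
      by_contra hc
      push_neg at hc
      have h := (key t (fun h => hc.1 (congrArg Fin.val h)) (fun h => hc.2 (congrArg Fin.val h))).mpr
        ⟨by simp only [hts]; omega, by simp only [hts]; omega⟩
      simp only [hts] at h
      omega
    have q1 := quad 0 (by omega)
    have q2 := quad 1 (by omega)
    have q3 := quad' 0 (by omega)
    have q4 := quad' 1 (by omega)
    omega
end

section
/- For the base Rubinstein-type function g on k² variables, the block sensitivity of g at the all-zeros input is exactly k: the k contiguous blocks of size k form disjoint sensitive blocks, and no collection of more than k disjoint sensitive blocks exists. -/
section Stmt2Aux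

lemma block_lt (k : ℕ) (j : Fin k) : j.val * k + k ≤ k ^ 2 := by
  have h1 : j.val + 1 ≤ k := j.isLt
  calc j.val * k + k = (j.val + 1) * k := by ring
    _ ≤ k * k := Nat.mul_le_mul_right k h1
    _ = k ^ 2 := (sq k).symm

lemma block_start_lt (k : ℕ) (hk : 2 ≤ k) (j : Fin k) : j.val * k < k ^ 2 := by
  have := block_lt k j; omega

set_option linter.unusedVariables false in
lemma rub_zero (k : ℕ) (hk : 2 ≤ k) : rub k (fun _ => false) = false := by
  simp only [rub, decide_eq_false_iff_not]
  rintro ⟨j, hj⟩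
  have := hj ⟨j.val * k, block_start_lt k hk j⟩
  simp only [Fin.val_mk] at this
  have h2 := this.mpr ⟨le_refl _, by omega⟩
  simp at h2

lemma rub_block (k : ℕ) (hk : 2 ≤ k) (j : Fin k) :
    rub k (flipSet (Finset.univ.filter
      (fun i : Fin (k ^ 2) => j.val * k ≤ i.val ∧ i.val < j.val * k + k))
      (fun _ => false)) = true := by
  simp only [rub, decide_eq_true_eq]
  refine ⟨j, fun i => ?_⟩
  simp only [flipSet, Finset.mem_filter, Finset.mem_univ, true_and]
  by_cases h : j.val * k ≤ i.val ∧ i.val < j.val * k + k <;> simp [h]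

end Stmt2Aux

/-- the block sensitivity of the base Rubinstein-type function at the all-zeros
input is exactly `k`: there are `k` disjoint sensitive blocks, and no more. -/
theorem stmt2 (k : ℕ) (hk : 2 ≤ k) :
    IsGreatest {m | SensBlocks (rub k) (fun _ => false) m} k := by
  constructor
  · refine ⟨fun a => Finset.univ.filter
      (fun i : Fin (k ^ 2) => a.val * k ≤ i.val ∧ i.val < a.val * k + k), ?_, ?_⟩
    · intro a b hab
      rw [Finset.disjoint_left]
      intro i hi hib
      simp only [Finset.mem_filter, Finset.mem_univ, true_and] at hi hib
      apply hab
      apply Fin.ext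
      rcases lt_trichotomy a.val b.val with h | h | h
      · exfalso
        have h2 : a.val + 1 ≤ b.val := h
        have h3 := Nat.mul_le_mul_right k h2
        rw [Nat.succ_mul] at h3
        omega
      · exact h
      · exfalso
        have h2 : b.val + 1 ≤ a.val := h
        have h3 := Nat.mul_le_mul_right k h2
        rw [Nat.succ_mul] at h3
        omega
    · intro a
      rw [rub_zero k hk, rub_block k hk a]
      simp
  · rintro m ⟨B, hdisj, hsens⟩
    have hz := rub_zero k hk
    have key : ∀ a : Fin m, ∃ j : Fin k, ∀ i : Fin (k ^ 2),
        (i ∈ B a ↔ (j.val * k ≤ i.val ∧ i.val < j.val * k + k)) := by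
      intro a
      have h := hsens a
      rw [hz] at h
      have htrue : rub k (flipSet (B a) (fun _ => false)) = true := by
        cases hb : rub k (flipSet (B a) (fun _ => false))
        · exact absurd hb h
        · rfl
      simp only [rub, decide_eq_true_eq] at htrue
      obtain ⟨j, hj⟩ := htrue
      refine ⟨j, fun i => ?_⟩
      have h2 := hj i
      simp only [flipSet] at h2
      by_cases hm : i ∈ B a <;> simp only [hm, if_true, if_false,
        Bool.not_false] at h2 ⊢ <;> simp at h2 ⊢
      · exact h2
      · exact h2
    choose φ hφ using key
    have hinj : Function.Injective φ := by
      intro a b hab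
      by_contra hne
      have hd := hdisj a b hne
      have hia : (⟨(φ a).val * k, block_start_lt k hk (φ a)⟩ : Fin (k ^ 2)) ∈ B a :=
        (hφ a _).mpr ⟨le_refl _, by show (φ a).val * k < (φ a).val * k + k; omega⟩
      have hib : (⟨(φ a).val * k, block_start_lt k hk (φ a)⟩ : Fin (k ^ 2)) ∈ B b := by
        refine (hφ b _).mpr ?_
        rw [← hab]
        exact ⟨le_refl _, by show (φ a).val * k < (φ a).val * k + k; omega⟩
      exact Finset.disjoint_left.mp hd hia hib
    have := Fintype.card_le_of_injective φ hinj
    simpa using this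
end

section
/- For the base Rubinstein-type function g on k² variables, every input x with g(x)=0 has block sensitivity at most k. -/
/-- every 0-input of the base Rubinstein-type function has block sensitivity
at most `k`. -/
theorem stmt3 (k : ℕ) (hk : 2 ≤ k) (x : Fin (k ^ 2) → Bool) (hx : rub k x = false)
    (m : ℕ) (hm : SensBlocks (rub k) x m) : m ≤ k := by
  obtain ⟨B, hdisj, hsens⟩ := hm
  have key : ∀ a : Fin m, ∃ j : Fin k, ∀ i : Fin (k ^ 2),
      (flipSet (B a) x i = true ↔ (j.val * k ≤ i.val ∧ i.val < j.val * k + k)) := by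
    intro a
    have h := hsens a
    rw [hx] at h
    have htrue : rub k (flipSet (B a) x) = true := by
      cases hb : rub k (flipSet (B a) x) with
      | false => exact absurd hb h
      | true => rfl
    simpa [rub, decide_eq_true_iff] using htrue
  choose j hj using key
  have hBdet : ∀ a (i : Fin (k ^ 2)), i ∈ B a ↔
      ¬ (x i = true ↔ ((j a).val * k ≤ i.val ∧ i.val < (j a).val * k + k)) := by
    intro a i
    have h := hj a i
    by_cases hmem : i ∈ B a
    · simp only [flipSet, hmem, if_true, Bool.not_eq_true'] at h
      constructor
      · intro _
        intro hiff
        cases hxi : x i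
        · rw [hxi] at h hiff
          exact absurd (hiff.mpr (h.mp rfl)) (by simp)
        · rw [hxi] at h hiff
          exact absurd (hiff.mp rfl) (by simpa using h)
      · intro _; exact hmem
    · simp only [flipSet, hmem, if_false] at h
      constructor
      · intro hc; exact absurd hc hmem
      · intro hniff; exact absurd h hniff
  have hnonempty : ∀ a, (B a).Nonempty := by
    intro a
    rcases Finset.eq_empty_or_nonempty (B a) with he | hne
    · exfalso
      apply hsens a
      have : flipSet (B a) x = x := by
        funext i
        simp [flipSet, he]
      rw [this]
    · exact hne
  have hinj : Function.Injective j := by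
    intro a b hab
    by_contra hne
    have hBeq : B a = B b := by
      ext i
      rw [hBdet a i, hBdet b i, hab]
    have hd := hdisj a b hne
    rw [hBeq] at hd
    have : B b = ∅ := by
      simpa using disjoint_self.mp hd
    exact absurd this (Finset.nonempty_iff_ne_empty.mp (hnonempty b))
  simpa using Fintype.card_le_of_injective j hinj
end

section
/- For the base Rubinstein-type function g on k² variables and any x with g(x)=0, the certificate complexity C(g,x) is at most max(k,2): either some pair of at most 2 bits (a 1 in a block together with a 0 in that block, or two 1s in different blocks) certifies g=0, or choosing one 0-position from each of the k contiguous blocks certifies g=0. -/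
lemma block_iff_aux (k : ℕ) (hk : 0 < k) (i : Fin (k ^ 2)) (j : Fin k) :
    (j.val * k ≤ i.val ∧ i.val < j.val * k + k) ↔ i.val / k = j.val := by
  constructor
  · rintro ⟨h1, h2⟩
    exact Nat.div_eq_of_lt_le (by omega) (by simpa [Nat.succ_mul] using h2)
  · intro h
    have hm := Nat.div_add_mod i.val k
    have hmod := Nat.mod_lt i.val hk
    rw [h, Nat.mul_comm] at hm
    omega

lemma rub_witness (k : ℕ) (hk : 0 < k) (y : Fin (k ^ 2) → Bool) (hy : rub k y = true) :
    ∃ j : Fin k, ∀ i : Fin (k ^ 2), y i = true ↔ i.val / k = j.val := by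
  simp only [rub, decide_eq_true_eq] at hy
  obtain ⟨j, hj⟩ := hy
  exact ⟨j, fun i => (hj i).trans (block_iff_aux k hk i j)⟩

/-- every 0-input of the base Rubinstein-type function has a certificate of size
at most `max k 2`. -/
theorem stmt4 (k : ℕ) (hk : 2 ≤ k) (x : Fin (k ^ 2) → Bool) (hx : rub k x = false) :
    ∃ S : Finset (Fin (k ^ 2)), IsCert (rub k) x S ∧ S.card ≤ max k 2 := by
  have hk0 : 0 < k := by omega
  by_cases hA : ∃ i i' : Fin (k ^ 2), x i = true ∧ x i' = false ∧ i.val / k = i'.val / k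
  · obtain ⟨i, i', h1, h0, heq⟩ := hA
    refine ⟨{i, i'}, ?_, (Finset.card_insert_le _ _).trans (by simp)⟩
    intro y hy
    rw [hx]
    by_contra hcon
    have hyt : rub k y = true := by
      cases h : rub k y <;> simp [h] at hcon ⊢
    obtain ⟨j, hj⟩ := rub_witness k hk0 y hyt
    have hyi : y i = true := by rw [hy i (by simp)]; exact h1
    have hyi' : y i' = false := by rw [hy i' (by simp)]; exact h0
    have e1 : i.val / k = j.val := (hj i).mp hyi
    have e2 : y i' = true := (hj i').mpr (by omega)
    simp [hyi'] at e2
  · by_cases hB : ∃ i i' : Fin (k ^ 2), x i = true ∧ x i' = true ∧ i.val / k ≠ i'.val / k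
    · obtain ⟨i, i', h1, h1', hne⟩ := hB
      refine ⟨{i, i'}, ?_, (Finset.card_insert_le _ _).trans (by simp)⟩
      intro y hy
      rw [hx]
      by_contra hcon
      have hyt : rub k y = true := by
        cases h : rub k y <;> simp [h] at hcon ⊢
      obtain ⟨j, hj⟩ := rub_witness k hk0 y hyt
      have e1 : i.val / k = j.val := (hj i).mp (by rw [hy i (by simp)]; exact h1)
      have e2 : i'.val / k = j.val := (hj i').mp (by rw [hy i' (by simp)]; exact h1')
      omega
    · -- x is all zero
      push_neg at hA hB
      have hall : ∀ i : Fin (k ^ 2), x i = false := by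
        intro i
        by_contra h
        have hxi : x i = true := by cases h' : x i <;> simp [h'] at h ⊢
        have hdlt : i.val / k < k := Nat.div_lt_of_lt_mul (by
          have : k ^ 2 = k * k := by ring
          omega)
        have : rub k x = true := by
          simp only [rub, decide_eq_true_eq]
          refine ⟨⟨i.val / k, hdlt⟩, fun i' => ?_⟩
          rw [block_iff_aux k hk0 i' ⟨i.val / k, hdlt⟩]
          show x i' = true ↔ i'.val / k = i.val / k
          constructor
          · intro h'
            exact hB i' i h' hxi
          · intro h'
            by_contra hcon
            have : x i' = false := by cases h'' : x i' <;> simp [h''] at hcon ⊢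
            exact absurd (hA i i' hxi this) (by omega)
        rw [this] at hx; exact absurd hx (by simp)
      have hlt : ∀ j : Fin k, j.val * k < k ^ 2 := by
        intro j
        have h := j.isLt
        have : k ^ 2 = k * k := by ring
        nlinarith
      refine ⟨Finset.image (fun j : Fin k => (⟨j.val * k, hlt j⟩ : Fin (k ^ 2)))
        Finset.univ, ?_, ?_⟩
      · intro y hy
        rw [hx]
        by_contra hcon
        have hyt : rub k y = true := by
          cases h : rub k y <;> simp [h] at hcon ⊢
        obtain ⟨j, hj⟩ := rub_witness k hk0 y hyt
        have hmem : (⟨j.val * k, hlt j⟩ : Fin (k ^ 2)) ∈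
            Finset.image (fun j : Fin k => (⟨j.val * k, hlt j⟩ : Fin (k ^ 2)))
            Finset.univ := Finset.mem_image_of_mem _ (Finset.mem_univ j)
        have h0 : y ⟨j.val * k, hlt j⟩ = false := by
          rw [hy _ hmem]; exact hall _
        have h1 : y ⟨j.val * k, hlt j⟩ = true := by
          rw [hj]
          show j.val * k / k = j.val
          exact Nat.mul_div_cancel j.val hk0
        rw [h0] at h1; exact absurd h1 (by simp)
      · exact (Finset.card_image_le).trans (by simp)
end

section
/- For the base Rubinstein-type function g on k² variables and any x with g(x)=1, the certificate complexity C(g,x) equals k²: no proper subset of the coordinates certifies that g=1. -/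
lemma rub_unique_flip (k : ℕ) (hk : 2 ≤ k) (x y : Fin (k ^ 2) → Bool) (i : Fin (k ^ 2))
    (hx : rub k x = true) (hy : rub k y = true)
    (hagree : ∀ t, t ≠ i → y t = x t) (hne : y i ≠ x i) : False := by
  rw [rub, decide_eq_true_iff] at hx hy
  obtain ⟨j, hj⟩ := hx
  obtain ⟨j', hj'⟩ := hy
  by_cases hjj : j = j'
  · subst hjj
    have := (hj' i).trans (hj i).symm
    exact hne (by rcases Bool.dichotomy (x i) with h | h <;>
      rcases Bool.dichotomy (y i) with h' | h' <;> simp_all)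
  · -- blocks are disjoint; pick two elements of block j
    have hjk : (j : ℕ) < k := j.isLt
    have hk2 : (j : ℕ) * k + k ≤ k ^ 2 := by
      have : ((j : ℕ) + 1) * k ≤ k * k := Nat.mul_le_mul_right k hjk
      nlinarith [sq_nonneg k, (show k^2 = k*k by ring)]
    have ha : (j : ℕ) * k < k ^ 2 := by omega
    have hb : (j : ℕ) * k + 1 < k ^ 2 := by omega
    set a : Fin (k ^ 2) := ⟨(j : ℕ) * k, ha⟩
    set b : Fin (k ^ 2) := ⟨(j : ℕ) * k + 1, hb⟩
    have hxa : x a = true := (hj a).mpr (by simp [a]; omega)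
    have hxb : x b = true := (hj b).mpr (by simp [b]; omega)
    -- block j' is disjoint from block j
    have hdisj : ∀ t : Fin (k ^ 2), (j : ℕ) * k ≤ t.val → t.val < (j : ℕ) * k + k →
        ¬ ((j' : ℕ) * k ≤ t.val ∧ t.val < (j' : ℕ) * k + k) := by
      intro t h1 h2 ⟨h3, h4⟩
      have hne' : (j : ℕ) ≠ (j' : ℕ) := fun h => hjj (Fin.ext h)
      rcases Nat.lt_or_ge (j : ℕ) (j' : ℕ) with h | h
      · have : ((j : ℕ) + 1) * k ≤ (j' : ℕ) * k := Nat.mul_le_mul_right k h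
        nlinarith
      · have h' : (j' : ℕ) < (j : ℕ) := lt_of_le_of_ne h (Ne.symm hne')
        have : ((j' : ℕ) + 1) * k ≤ (j : ℕ) * k := Nat.mul_le_mul_right k h'
        nlinarith
    have hya : a ≠ i → False := by
      intro h
      have : y a = true := (hagree a h).trans hxa
      exact hdisj a (by simp [a]) (by simp [a]; omega) ((hj' a).mp this)
    have hyb : b ≠ i → False := by
      intro h
      have : y b = true := (hagree b h).trans hxb
      exact hdisj b (by simp [b]) (by simp [b]; omega) ((hj' b).mp this)
    by_cases hai : a = i
    · exact hyb (fun h => by simp [a, b, Fin.ext_iff] at hai h; omega)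
    · exact hya hai

/-- every 1-input of the base Rubinstein-type function has certificate
complexity exactly `k²`: the full set certifies, and no smaller set does. -/
theorem stmt5 (k : ℕ) (hk : 2 ≤ k) (x : Fin (k ^ 2) → Bool) (hx : rub k x = true) :
    IsLeast {m | ∃ S : Finset (Fin (k ^ 2)), IsCert (rub k) x S ∧ S.card = m} (k ^ 2) := by
  constructor
  · exact ⟨Finset.univ, fun y hy => by
      have : y = x := funext fun t => hy t (Finset.mem_univ t)
      rw [this], by simp⟩
  · rintro m ⟨S, hS, rfl⟩
    have : S = Finset.univ := by
      by_contra h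
      obtain ⟨i, hi⟩ : ∃ i, i ∉ S := by
        by_contra h'
        push_neg at h'
        exact h (Finset.eq_univ_iff_forall.mpr h')
      have hflip : rub k (flipOne i x) = rub k x := hS _ (fun t ht => by
        have : t ≠ i := fun h => hi (h ▸ ht)
        simp [flipOne, Function.update_of_ne this])
      exact rub_unique_flip k hk x (flipOne i x) i hx (hflip.trans hx)
        (fun t ht => by simp [flipOne, Function.update_of_ne ht])
        (by simp [flipOne])
    simp [this]
end

section
/- Let ρ be a restriction of the base Rubinstein-type function g on k² variables leaving r variables free, such that g|_ρ is not constant. Then for every input x of g|_ρ with g|_ρ(x)=0, the certificate complexity C(g|_ρ, x) is at most max(2, r/k). -/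
/-- Membership of position `n` in block `j`. -/
def blkP (k : ℕ) (j : Fin k) (n : ℕ) : Prop := j.val * k ≤ n ∧ n < j.val * k + k

lemma blkP_disj {k : ℕ} {j j' : Fin k} (h : j ≠ j') {n : ℕ}
    (h1 : blkP k j n) (h2 : blkP k j' n) : False := by
  obtain ⟨h1a, h1b⟩ := h1
  obtain ⟨h2a, h2b⟩ := h2
  have hne : j.val ≠ j'.val := fun hv => h (Fin.ext hv)
  rcases Nat.lt_or_ge j.val j'.val with hlt | hge
  · have : (j.val + 1) * k ≤ j'.val * k := Nat.mul_le_mul_right k hlt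
    rw [Nat.add_mul, Nat.one_mul] at this
    omega
  · have hlt : j'.val < j.val := lt_of_le_of_ne hge (Ne.symm hne)
    have : (j'.val + 1) * k ≤ j.val * k := Nat.mul_le_mul_right k hlt
    rw [Nat.add_mul, Nat.one_mul] at this
    omega

lemma rub_eq_true_iff (k : ℕ) (z : Fin (k ^ 2) → Bool) :
    rub k z = true ↔ ∃ j : Fin k, ∀ i : Fin (k ^ 2), (z i = true ↔ blkP k j i.val) := by
  simp [rub, blkP]


/-- for a non-constant restriction of the base Rubinstein-type function with `r`
free variables, every 0-input has a certificate of size at most `max 2 (r / k)`. -/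
theorem stmt7 (k : ℕ) (hk : 2 ≤ k) (ρ : Fin (k ^ 2) → Option Bool)
    (hnc : ∃ x y, restrictTo ρ (rub k) x ≠ restrictTo ρ (rub k) y)
    (x : {i : Fin (k ^ 2) // ρ i = none} → Bool)
    (hx : restrictTo ρ (rub k) x = false) :
    ∃ S : Finset {i : Fin (k ^ 2) // ρ i = none},
      IsCert (restrictTo ρ (rub k)) x S ∧
      S.card ≤ max 2 (Fintype.card {i : Fin (k ^ 2) // ρ i = none} / k) := by
  classical
  let F := {i : Fin (k ^ 2) // ρ i = none}
  have hkpos : 0 < k := by omega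
  -- F is nonempty
  have hne : Nonempty F := by
    by_contra hemp
    rcases hnc with ⟨a, b, hab⟩
    have : a = b := funext fun i => (hemp ⟨i⟩).elim
    exact hab (this ▸ rfl)
  obtain ⟨i0⟩ := hne
  -- the extension of y : F → Bool to all coordinates
  set ext : (F → Bool) → Fin (k ^ 2) → Bool :=
    fun y i => if h : ρ i = none then y ⟨i, h⟩ else (ρ i).getD false with hext
  have hrestrict : ∀ y : F → Bool, restrictTo ρ (rub k) y = rub k (ext y) := fun y => rfl
  -- alive blocks
  set A : Finset (Fin k) :=
    Finset.univ.filter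
      (fun j => ∀ i : Fin (k ^ 2), ρ i ≠ none → ((ρ i).getD false = true ↔ blkP k j i.val))
    with hA
  -- x is a 0-input
  have hx0 : ¬ ∃ j : Fin k, ∀ i : Fin (k ^ 2), (ext x i = true ↔ blkP k j i.val) := by
    intro h
    have h2 := (rub_eq_true_iff k (ext x)).2 h
    rw [hrestrict x, h2] at hx
    simp at hx
  -- for each alive block, a free disagreeing coordinate exists
  have hexists : ∀ j ∈ A, ∃ i : F, ¬ (x i = true ↔ blkP k j i.val.val) := by
    intro j hj
    rw [hA, Finset.mem_filter] at hj
    by_contra hno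
    push_neg at hno
    apply hx0
    refine ⟨j, fun i => ?_⟩
    by_cases h : ρ i = none
    · have := hno ⟨i, h⟩
      simpa [hext, h] using this
    · have := hj.2 i h
      simpa [hext, h] using this
  -- choose the disagreeing coordinates
  set c : Fin k → F := fun j =>
    if h : ∃ i : F, ¬ (x i = true ↔ blkP k j i.val.val) then h.choose else i0 with hc
  have hcspec : ∀ j ∈ A, ¬ (x (c j) = true ↔ blkP k j (c j).val.val) := by
    intro j hj
    have h := hexists j hj
    rw [hc]
    simp only [dif_pos h]
    exact h.choose_spec
  refine ⟨A.image c, ?_, ?_⟩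
  · -- certificate
    intro y hy
    rw [hx, hrestrict]
    by_contra hcon
    rw [Bool.not_eq_false, rub_eq_true_iff] at hcon
    obtain ⟨j, hjw⟩ := hcon
    have hjA : j ∈ A := by
      rw [hA, Finset.mem_filter]
      refine ⟨Finset.mem_univ _, fun i hi => ?_⟩
      have := hjw i
      simpa [hext, hi] using this
    have hmem : c j ∈ A.image c := Finset.mem_image_of_mem c hjA
    have hyx : y (c j) = x (c j) := hy _ hmem
    have := hjw (c j).val
    rw [show ext y (c j).val = y (c j) by simp [hext, (c j).2]] at this
    rw [hyx] at this
    exact hcspec j hjA this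
  · -- cardinality
    have hcard : (A.image c).card ≤ A.card := Finset.card_image_le
    by_cases hA2 : A.card ≤ 2
    · exact le_trans hcard (le_trans hA2 (le_max_left _ _))
    · push_neg at hA2
      have h1lt : 1 < A.card := by omega
      obtain ⟨j1, hj1, j2, hj2, hj12⟩ := Finset.one_lt_card.1 h1lt
      -- every alive block is fully free
      have hfree : ∀ j ∈ A, ∀ i : Fin (k ^ 2), blkP k j i.val → ρ i = none := by
        intro j hj i hbi
        by_contra hfix
        obtain ⟨j', hj', hjj'⟩ : ∃ j' ∈ A, j' ≠ j := by
          by_cases h : j1 = j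
          · exact ⟨j2, hj2, fun he => hj12 (he.symm ▸ h.symm ▸ rfl)⟩
          · exact ⟨j1, hj1, h⟩
        rw [hA, Finset.mem_filter] at hj hj'
        have h1 := (hj.2 i hfix).2 hbi
        have h2 := (hj'.2 i hfix).1 h1
        exact blkP_disj hjj' h2 hbi
      -- the free coordinates of block j
      set T : Fin k → Finset F := fun j => Finset.univ.filter (fun i : F => blkP k j i.val.val)
        with hT
      have hTcard : ∀ j ∈ A, (T j).card = k := by
        intro j hj
        have hub : ∀ t : Fin k, j.val * k + t.val < k ^ 2 := by
          intro t
          have h1 : j.val + 1 ≤ k := j.isLt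
          have : (j.val + 1) * k ≤ k * k := Nat.mul_le_mul_right k h1
          rw [Nat.add_mul, Nat.one_mul] at this
          have h2 := t.isLt
          rw [pow_two]
          omega
        have hfr : ∀ t : Fin k, ρ ⟨j.val * k + t.val, hub t⟩ = none := by
          intro t
          refine hfree j hj _ ?_
          refine ⟨Nat.le_add_right _ _, ?_⟩
          show j.val * k + t.val < j.val * k + k
          have := t.isLt
          omega
        set e : Fin k → F := fun t => ⟨⟨j.val * k + t.val, hub t⟩, hfr t⟩ with he
        have hinj : Function.Injective e := by
          intro a b hab
          have h3 : j.val * k + a.val = j.val * k + b.val :=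
            congrArg (fun i : F => i.val.val) hab
          exact Fin.ext (by omega)
        have himg : T j = Finset.univ.image e := by
          ext i
          simp only [hT, Finset.mem_filter, Finset.mem_univ, true_and, Finset.mem_image]
          constructor
          · rintro ⟨h1, h2⟩
            refine ⟨⟨i.val.val - j.val * k, by omega⟩, ?_⟩
            apply Subtype.ext
            apply Fin.ext
            show j.val * k + (i.val.val - j.val * k) = i.val.val
            omega
          · rintro ⟨t, _, rfl⟩
            refine ⟨Nat.le_add_right _ _, ?_⟩
            show j.val * k + t.val < j.val * k + k
            have := t.isLt
            omega
        rw [himg, Finset.card_image_of_injective _ hinj, Finset.card_univ, Fintype.card_fin]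
      have hdisj : ∀ j ∈ A, ∀ j' ∈ A, j ≠ j' → Disjoint (T j) (T j') := by
        intro j _ j' _ hjj'
        rw [Finset.disjoint_left]
        intro i hi hi'
        rw [hT] at hi hi'
        simp only [Finset.mem_filter] at hi hi'
        exact blkP_disj hjj' hi.2 hi'.2
      have hsum : (A.biUnion T).card = A.card * k := by
        rw [Finset.card_biUnion hdisj]
        rw [Finset.sum_congr rfl hTcard, Finset.sum_const, smul_eq_mul]
      have hle : A.card * k ≤ Fintype.card F := by
        rw [← hsum, ← Finset.card_univ]
        exact Finset.card_le_card (Finset.subset_univ _)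
      have : A.card ≤ Fintype.card F / k := (Nat.le_div_iff_mul_le hkpos).2 hle
      exact le_trans hcard (le_trans this (le_max_right _ _))
end

section
/- Define f on k⁴ variables as the OR of k² disjoint copies of g. Then for every input x with f(x)=1, the block sensitivity bs(f,x) is at most k². -/
/-- every 1-input of `f` (the OR of `k²` copies of `g`) has block sensitivity
at most `k²`. -/
theorem stmt10 (k : ℕ) (hk : 2 ≤ k) (x : Fin (k ^ 2) × Fin (k ^ 2) → Bool)
    (hx : bigRub k x = true) (m : ℕ) (hm : SensBlocks (bigRub k) x m) : m ≤ k ^ 2 := by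
  obtain ⟨c, hc⟩ := (decide_eq_true_eq).mp hx
  obtain ⟨B, hdisj, hsens⟩ := hm
  have key : ∀ a : Fin m, ∃ t : Fin (k ^ 2), (c, t) ∈ B a := by
    intro a
    by_contra h
    push_neg at h
    apply hsens a
    rw [hx]
    apply decide_eq_true_eq.mpr
    refine ⟨c, ?_⟩
    have heq : (fun t => flipSet (B a) x (c, t)) = fun t => x (c, t) := by
      funext t
      simp [flipSet, h t]
    rw [heq]
    exact hc
  choose t ht using key
  have hinj : Function.Injective t := by
    intro a b hab
    by_contra hne
    exact absurd ((hdisj a b hne).le_bot (Finset.mem_inter.mpr ⟨ht a, hab ▸ ht b⟩)) (Finset.notMem_empty _)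
  simpa using Fintype.card_le_of_injective t hinj
end

section
/- Define f on k⁴ variables as the OR of k² disjoint copies of g. For every restriction ρ of f leaving at most C·k³ free variables (for a constant C), the certificate complexity of the restricted function satisfies C(f|_ρ) ≤ C·k² + 2k² + k², i.e., C(f|_ρ) = O(k²). -/
/-
Write `f` as a DNF whose terms are indexed by (copy `c`, block `j`): the term fixes the whole
row `c` to the indicator of block `j`. A 1-input is certified by one satisfied term, i.e. by
one row (`k²` variables); a 0-input is certified by one disagreeing free variable for each term
that the restriction has not already falsified. A surviving term whose row contains a fixed `1`
is determined by the row (at most `k²` of them); otherwise its whole block of `k` variables is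
free, and these blocks are disjoint, so there are at most `Ck³ / k = Ck²` of them.
-/

open Finset

lemma Finset.exists_card_le_forall_exists {α β : Type*} [DecidableEq β] {R : α → β → Prop}
    (s : Finset α) (h : ∀ a ∈ s, ∃ b, R a b) :
    ∃ t : Finset β, #t ≤ #s ∧ ∀ a ∈ s, ∃ b ∈ t, R a b := by
  choose g hg using h
  refine ⟨s.attach.image fun a => g a.1 a.2, card_image_le.trans card_attach.le, ?_⟩
  exact fun a ha => ⟨g a ha, mem_image_of_mem _ (mem_attach _ ⟨a, ha⟩), hg a ha⟩

section Restriction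

variable {I : Type*}

def extendBy (ρ : I → Option Bool) (y : {i // ρ i = none} → Bool) : I → Bool :=
  fun i => if h : ρ i = none then y ⟨i, h⟩ else (ρ i).getD false

lemma extendBy_free {ρ : I → Option Bool} (y : {i // ρ i = none} → Bool)
    (i : {i // ρ i = none}) : extendBy ρ y i = y i :=
  dif_pos i.2

lemma extendBy_of_eq_some {ρ : I → Option Bool} {i : I} {b : Bool} (h : ρ i = some b)
    (y : {i // ρ i = none} → Bool) : extendBy ρ y i = b := by
  simp [extendBy, h]

lemma extendBy_eq_on {ρ : I → Option Bool} {T : Finset I} {x y : {i // ρ i = none} → Bool}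
    (h : ∀ i ∈ T.subtype (ρ · = none), y i = x i) :
    ∀ i ∈ T, extendBy ρ y i = extendBy ρ x i := by
  intro i hi
  by_cases hfree : ρ i = none
  · simpa only [extendBy, dif_pos hfree] using h ⟨i, hfree⟩ (mem_subtype.2 hi)
  · simp only [extendBy, dif_neg hfree]

variable {P : Type*}

/-- The term `p` of a DNF with supports `D` and values `τ` is not falsified by `ρ`. -/
def TermCompatible (ρ : I → Option Bool) (D : P → Finset I) (τ : P → I → Bool) (p : P) : Prop :=
  ∀ i ∈ D p, ∀ b, ρ i = some b → τ p i = b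

instance (ρ : I → Option Bool) (D : P → Finset I) (τ : P → I → Bool) :
    DecidablePred (TermCompatible ρ D τ) :=
  fun _ => by unfold TermCompatible; infer_instance

lemma termCompatible_of_forall_eq {ρ : I → Option Bool} {D : P → Finset I} {τ : P → I → Bool}
    {p : P} {y : {i // ρ i = none} → Bool} (h : ∀ i ∈ D p, extendBy ρ y i = τ p i) :
    TermCompatible ρ D τ p :=
  fun i hi _ hb => (h i hi).symm.trans (extendBy_of_eq_some hb y)

lemma exists_free_ne_of_termCompatible {ρ : I → Option Bool} {D : P → Finset I}
    {τ : P → I → Bool} {p : P} {x : {i // ρ i = none} → Bool} (hp : TermCompatible ρ D τ p)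
    (hx : ¬ ∀ i ∈ D p, extendBy ρ x i = τ p i) :
    ∃ i : {i // ρ i = none}, i.1 ∈ D p ∧ x i ≠ τ p i := by
  push Not at hx
  obtain ⟨i, hi, hne⟩ := hx
  cases hρ : ρ i with
  | none => exact ⟨⟨i, hρ⟩, hi, fun h => hne ((extendBy_free x ⟨i, hρ⟩).trans h)⟩
  | some _ => exact absurd ((hp i hi _ hρ).trans (extendBy_of_eq_some hρ x).symm) hne.symm

lemma restrictTo_apply (ρ : I → Option Bool) (f : (I → Bool) → Bool)
    (y : {i // ρ i = none} → Bool) : restrictTo ρ f y = f (extendBy ρ y) := rfl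

variable (f : (I → Bool) → Bool) (D : P → Finset I) (τ : P → I → Bool)

lemma exists_isCert_restrictTo_of_eq_true
    (hf : ∀ z, f z = true ↔ ∃ p, ∀ i ∈ D p, z i = τ p i)
    {ρ : I → Option Bool} {x : {i // ρ i = none} → Bool} (hx : restrictTo ρ f x = true) :
    ∃ p S, IsCert (restrictTo ρ f) x S ∧ #S ≤ #(D p) := by
  obtain ⟨p, hp⟩ := (hf _).1 hx
  refine ⟨p, (D p).subtype (ρ · = none), fun y hy => ?_,
    (card_subtype _ _).trans_le (card_filter_le _ _)⟩
  rw [hx, restrictTo_apply, hf]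
  exact ⟨p, fun i hi => (extendBy_eq_on hy i hi).trans (hp i hi)⟩

lemma exists_isCert_restrictTo_of_eq_false [DecidableEq I] [Fintype P]
    (hf : ∀ z, f z = true ↔ ∃ p, ∀ i ∈ D p, z i = τ p i)
    {ρ : I → Option Bool} {x : {i // ρ i = none} → Bool} (hx : restrictTo ρ f x = false) :
    ∃ S, IsCert (restrictTo ρ f) x S ∧ #S ≤ #{p | TermCompatible ρ D τ p} := by
  have hwit : ∀ p ∈ ({p | TermCompatible ρ D τ p} : Finset P),
      ∃ i : {i // ρ i = none}, i.1 ∈ D p ∧ x i ≠ τ p i := by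
    intro p hp
    refine exists_free_ne_of_termCompatible (mem_filter.1 hp).2 fun hsat => ?_
    rw [restrictTo_apply, ← Bool.not_eq_true, hf] at hx
    exact hx ⟨p, hsat⟩
  obtain ⟨S, hcard, hS⟩ := exists_card_le_forall_exists _ hwit
  refine ⟨S, fun y hy => ?_, hcard⟩
  rw [hx, ← Bool.not_eq_true, restrictTo_apply, hf]
  rintro ⟨p, hp⟩
  obtain ⟨i, hiS, hiD, hne⟩ :=
    hS p (mem_filter.2 ⟨mem_univ _, termCompatible_of_forall_eq hp⟩)
  exact hne ((hy i hiS).symm.trans ((extendBy_free y i).symm.trans (hp i hiD)))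

end Restriction

section Blocks

variable {k : ℕ}

def InBlock (j : Fin k) (t : Fin (k ^ 2)) : Prop :=
  j.val * k ≤ t.val ∧ t.val < j.val * k + k

instance (j : Fin k) (t : Fin (k ^ 2)) : Decidable (InBlock j t) :=
  inferInstanceAs (Decidable (_ ∧ _))

lemma InBlock.div_eq {j : Fin k} {t : Fin (k ^ 2)} (h : InBlock j t) : t.val / k = j.val :=
  Nat.div_eq_of_lt_le h.1 (by rw [Nat.succ_mul]; exact h.2)

lemma InBlock.unique {j j' : Fin k} {t : Fin (k ^ 2)} (h : InBlock j t) (h' : InBlock j' t) :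
    j = j' :=
  Fin.ext (h.div_eq.symm.trans h'.div_eq)

/-- `blockPos (j, s) = j * k + s`, the `s`-th position of block `j`. -/
def blockPos (q : Fin k × Fin k) : Fin (k ^ 2) :=
  Fin.cast (sq k).symm (finProdFinEquiv q)

lemma blockPos_injective : Function.Injective (blockPos (k := k)) :=
  (Fin.cast_injective _).comp finProdFinEquiv.injective

lemma inBlock_blockPos (q : Fin k × Fin k) : InBlock q.1 (blockPos q) := by
  simp only [InBlock, blockPos, Fin.val_cast, finProdFinEquiv_apply_val]
  constructor <;> nlinarith [q.2.isLt]

def row (c : Fin (k ^ 2)) : Finset (Fin (k ^ 2) × Fin (k ^ 2)) :=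
  univ.map (Function.Embedding.sectR c _)

lemma mem_row (c t : Fin (k ^ 2)) : (c, t) ∈ row c := by
  simp [row]

lemma card_row (c : Fin (k ^ 2)) : #(row c) = k ^ 2 := by
  simp [row]

def rubTerm (p : Fin (k ^ 2) × Fin k) (i : Fin (k ^ 2) × Fin (k ^ 2)) : Bool :=
  decide (InBlock p.2 i.2)

lemma bigRub_eq_true_iff (z : Fin (k ^ 2) × Fin (k ^ 2) → Bool) :
    bigRub k z = true ↔ ∃ p : Fin (k ^ 2) × Fin k, ∀ i ∈ row p.1, z i = rubTerm p i := by
  simp only [bigRub, rub, decide_eq_true_eq, Prod.exists, row, forall_mem_map, mem_univ,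
    forall_const, Function.Embedding.sectR_apply, rubTerm]
  refine exists_congr fun c => exists_congr fun j => forall_congr' fun t => ?_
  rw [Bool.eq_iff_iff (b := decide _), decide_eq_true_iff]
  rfl

end Blocks

section Counting

variable {k : ℕ} (ρ : Fin (k ^ 2) × Fin (k ^ 2) → Option Bool)

def compatibleRubTerms : Finset (Fin (k ^ 2) × Fin k) :=
  {p | TermCompatible ρ (fun p => row p.1) rubTerm p}

variable {ρ}

lemma inBlock_of_mem_compatibleRubTerms {p : Fin (k ^ 2) × Fin k}
    (hp : p ∈ compatibleRubTerms ρ) {t : Fin (k ^ 2)} (ht : ρ (p.1, t) = some true) :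
    InBlock p.2 t :=
  decide_eq_true_iff.1 ((mem_filter.1 hp).2 _ (mem_row _ _) _ ht)

lemma card_compatibleRubTerms_filter_fixed_one_le :
    #((compatibleRubTerms ρ).filter fun p => ∃ t, ρ (p.1, t) = some true) ≤ k ^ 2 := by
  refine (card_le_card_of_injOn Prod.fst (fun _ _ => mem_univ _) ?_).trans
    (card_univ.trans (Fintype.card_fin _)).le
  rintro p hp q hq (hpq : p.1 = q.1)
  obtain ⟨hpc, t, ht⟩ := mem_filter.1 hp
  have hqt : ρ (q.1, t) = some true := hpq ▸ ht
  exact Prod.ext hpq ((inBlock_of_mem_compatibleRubTerms hpc ht).unique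
    (inBlock_of_mem_compatibleRubTerms (mem_filter.1 hq).1 hqt))

lemma blockPos_free_of_mem_compatibleRubTerms {p : Fin (k ^ 2) × Fin k}
    (hp : p ∈ compatibleRubTerms ρ) (hno : ¬ ∃ t, ρ (p.1, t) = some true) (s : Fin k) :
    ρ (p.1, blockPos (p.2, s)) = none := by
  cases hρ : ρ (p.1, blockPos (p.2, s)) with
  | none => rfl
  | some b =>
    have hb : decide (InBlock p.2 (blockPos (p.2, s))) = b :=
      (mem_filter.1 hp).2 _ (mem_row _ _) b hρ
    rw [decide_eq_true (inBlock_blockPos (p.2, s))] at hb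
    exact absurd ⟨_, hb ▸ hρ⟩ hno

lemma card_compatibleRubTerms_filter_not_fixed_one_le {C : ℕ} (hk : 0 < k)
    (hfree : Fintype.card {i // ρ i = none} ≤ C * k ^ 3) :
    #((compatibleRubTerms ρ).filter fun p => ¬ ∃ t, ρ (p.1, t) = some true) ≤ C * k ^ 2 := by
  set Q := (compatibleRubTerms ρ).filter fun p => ¬ ∃ t, ρ (p.1, t) = some true
  have hblocks : #(Q ×ˢ (univ : Finset (Fin k))) ≤ #{i | ρ i = none} := by
    refine card_le_card_of_injOn (fun q => (q.1.1, blockPos (q.1.2, q.2))) ?_ ?_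
    · rintro ⟨p, s⟩ hps
      obtain ⟨hp, hno⟩ := mem_filter.1 (mem_product.1 hps).1
      exact mem_filter.2 ⟨mem_univ _, blockPos_free_of_mem_compatibleRubTerms hp hno s⟩
    · rintro ⟨⟨c, j⟩, s⟩ - ⟨⟨c', j'⟩, s'⟩ - h
      obtain ⟨rfl, hpos⟩ := Prod.ext_iff.1 h
      obtain ⟨rfl, rfl⟩ := Prod.ext_iff.1 (blockPos_injective hpos)
      rfl
  rw [card_product, card_univ, Fintype.card_fin, ← Fintype.card_subtype] at hblocks
  exact Nat.le_of_mul_le_mul_right (by linarith [hblocks, hfree]) hk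

lemma card_compatibleRubTerms_le {C : ℕ} (hk : 0 < k)
    (hfree : Fintype.card {i // ρ i = none} ≤ C * k ^ 3) :
    #(compatibleRubTerms ρ) ≤ k ^ 2 + C * k ^ 2 := by
  rw [← card_filter_add_card_filter_not (fun p => ∃ t, ρ (p.1, t) = some true)]
  exact add_le_add card_compatibleRubTerms_filter_fixed_one_le
    (card_compatibleRubTerms_filter_not_fixed_one_le hk hfree)

end Counting

/-- every restriction of `f` (the OR of `k²` copies of `g`) leaving at most
`C·k³` free variables has certificate complexity at most `C·k² + 2k² + k² = O(k²)`. -/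
theorem stmt11 (k C : ℕ) (hk : 2 ≤ k)
    (ρ : Fin (k ^ 2) × Fin (k ^ 2) → Option Bool)
    (hfree : Fintype.card {i : Fin (k ^ 2) × Fin (k ^ 2) // ρ i = none} ≤ C * k ^ 3)
    (x : {i : Fin (k ^ 2) × Fin (k ^ 2) // ρ i = none} → Bool) :
    ∃ S : Finset {i : Fin (k ^ 2) × Fin (k ^ 2) // ρ i = none},
      IsCert (restrictTo ρ (bigRub k)) x S ∧
      S.card ≤ C * k ^ 2 + 2 * k ^ 2 + k ^ 2 := by
  cases hx : restrictTo ρ (bigRub k) x with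
  | true =>
    obtain ⟨p, S, hS, hcard⟩ :=
      exists_isCert_restrictTo_of_eq_true _ _ _ bigRub_eq_true_iff hx
    refine ⟨S, hS, ?_⟩
    rw [card_row] at hcard
    omega
  | false =>
    obtain ⟨S, hS, hcard⟩ :=
      exists_isCert_restrictTo_of_eq_false _ _ _ bigRub_eq_true_iff hx
    have hterms := card_compatibleRubTerms_le (by omega) hfree
    exact ⟨S, hS, by unfold compatibleRubTerms at hterms; omega⟩
end

section
/- Define f on k⁴ variables as the OR of k² disjoint copies of g. For every restriction ρ of f leaving at most C·k³ free variables, the block sensitivity bs(f|_ρ) = O(k²) (specifically, at most C·k² + k² for 0-inputs and at most k² for 1-inputs). -/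
private lemma bool_eq_decide {b : Bool} {P : Prop} [Decidable P] :
    (b = true ↔ P) ↔ b = decide P := by
  cases b <;> simp

def pat (k : ℕ) (j : Fin k) (i : Fin (k ^ 2)) : Bool :=
  decide (j.val * k ≤ i.val ∧ i.val < j.val * k + k)

lemma rub_iff (k : ℕ) (y : Fin (k ^ 2) → Bool) :
    rub k y = true ↔ ∃ j : Fin k, ∀ i, y i = pat k j i := by
  unfold rub pat
  rw [decide_eq_true_eq]
  exact exists_congr fun j => forall_congr' fun i => bool_eq_decide

lemma bigRub_iff (k : ℕ) (X : Fin (k ^ 2) × Fin (k ^ 2) → Bool) :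
    bigRub k X = true ↔ ∃ c, ∃ j : Fin k, ∀ t, X (c, t) = pat k j t := by
  unfold bigRub
  rw [decide_eq_true_eq]
  exact exists_congr fun c => rub_iff k _

lemma interval_disj {k : ℕ} {j j' : Fin k} (h : j ≠ j') {t : ℕ}
    (h1 : j.val * k ≤ t ∧ t < j.val * k + k)
    (h2 : j'.val * k ≤ t ∧ t < j'.val * k + k) : False := by
  have hne : j.val ≠ j'.val := fun hv => h (Fin.ext hv)
  rcases Nat.lt_or_ge j.val j'.val with hlt | hge
  · have h3 : (j.val + 1) * k ≤ j'.val * k := Nat.mul_le_mul_right k hlt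
    rw [Nat.succ_mul] at h3; omega
  · have hlt' : j'.val < j.val := lt_of_le_of_ne hge (Ne.symm hne)
    have h3 : (j'.val + 1) * k ≤ j.val * k := Nat.mul_le_mul_right k hlt'
    rw [Nat.succ_mul] at h3; omega

lemma interval_ub {k : ℕ} (j : Fin k) : j.val * k + k ≤ k ^ 2 := by
  have h3 : (j.val + 1) * k ≤ k * k := Nat.mul_le_mul_right k j.isLt
  rw [Nat.succ_mul] at h3
  have : k ^ 2 = k * k := by ring
  omega


/-- every restriction of `f` (the OR of `k²` copies of `g`) leaving at most
`C·k³` free variables has block sensitivity at most `C·k² + k²` on 0-inputs and at most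
`k²` on 1-inputs, hence `O(k²)` overall. -/
theorem stmt12 (k C : ℕ) (hk : 2 ≤ k)
    (ρ : Fin (k ^ 2) × Fin (k ^ 2) → Option Bool)
    (hfree : Fintype.card {i : Fin (k ^ 2) × Fin (k ^ 2) // ρ i = none} ≤ C * k ^ 3)
    (x : {i : Fin (k ^ 2) × Fin (k ^ 2) // ρ i = none} → Bool)
    (m : ℕ) (hm : SensBlocks (restrictTo ρ (bigRub k)) x m) :
    (restrictTo ρ (bigRub k) x = false → m ≤ C * k ^ 2 + k ^ 2) ∧
    (restrictTo ρ (bigRub k) x = true → m ≤ k ^ 2) := by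
  classical
  obtain ⟨B, hdisj, hsens⟩ := hm
  set X : Fin (k ^ 2) × Fin (k ^ 2) → Bool :=
    fun i => if h : ρ i = none then x ⟨i, h⟩ else (ρ i).getD false with hX
  have hval : restrictTo ρ (bigRub k) x = bigRub k X := rfl
  let emb : {i : Fin (k ^ 2) × Fin (k ^ 2) // ρ i = none} ↪ Fin (k ^ 2) × Fin (k ^ 2) :=
    Function.Embedding.subtype _
  let B' : Fin m → Finset (Fin (k ^ 2) × Fin (k ^ 2)) := fun a => (B a).map emb
  have hmem : ∀ (a) (i) (h : ρ i = none), i ∈ B' a ↔ ⟨i, h⟩ ∈ B a := by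
    intro a i h
    constructor
    · intro hi
      obtain ⟨b, hb, he⟩ := Finset.mem_map.mp hi
      have : b = ⟨i, h⟩ := Subtype.ext he
      rwa [this] at hb
    · intro hb
      exact Finset.mem_map_of_mem emb hb
  have hfreeB : ∀ a, ∀ i ∈ B' a, ρ i = none := by
    intro a i hi
    obtain ⟨b, _, rfl⟩ := Finset.mem_map.mp hi
    exact b.2
  have hflip : ∀ a i, (if h : ρ i = none then flipSet (B a) x ⟨i, h⟩ else (ρ i).getD false)
      = flipSet (B' a) X i := by
    intro a i
    by_cases h : ρ i = none
    · rw [dif_pos h]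
      by_cases hb : (⟨i, h⟩ : {i // ρ i = none}) ∈ B a
      · have hb' : i ∈ B' a := (hmem a i h).mpr hb
        simp [flipSet, hb, hb', hX, h]
      · have hb' : i ∉ B' a := fun hh => hb ((hmem a i h).mp hh)
        simp [flipSet, hb, hb', hX, h]
    · rw [dif_neg h]
      have hb' : i ∉ B' a := fun hh => h (hfreeB a i hh)
      simp [flipSet, hb', hX, h]
  have hsens' : ∀ a, bigRub k (flipSet (B' a) X) ≠ bigRub k X := by
    intro a
    have h1 := hsens a
    rw [hval] at h1
    have he : restrictTo ρ (bigRub k) (flipSet (B a) x) = bigRub k (flipSet (B' a) X) :=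
      congrArg (bigRub k) (funext (hflip a))
    rwa [he] at h1
  have hdisj' : ∀ a b, a ≠ b → Disjoint (B' a) (B' b) := fun a b h =>
    (Finset.disjoint_map emb).mpr (hdisj a b h)
  constructor
  · -- 0-input case
    intro hfalse
    rw [hval] at hfalse
    have hrowfalse : ∀ (c : Fin (k ^ 2)) (j : Fin k), ∃ t, X (c, t) ≠ pat k j t := by
      intro c j
      by_contra hno
      push_neg at hno
      have : bigRub k X = true := (bigRub_iff k X).mpr ⟨c, j, hno⟩
      rw [hfalse] at this
      exact Bool.false_ne_true this
    have hact : ∀ a, ∃ c, ∃ j : Fin k, ∀ t, flipSet (B' a) X (c, t) = pat k j t := by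
      intro a
      have h1 := hsens' a
      rw [hfalse] at h1
      exact (bigRub_iff k _).mp (Bool.ne_false_iff.mp h1)
    choose cc jj hcj using hact
    have hFout : ∀ a t, (cc a, t) ∉ B' a → X (cc a, t) = pat k (jj a) t := by
      intro a t h
      have h1 := hcj a t
      rwa [show flipSet (B' a) X (cc a, t) = X (cc a, t) from if_neg h] at h1
    have hFin : ∀ a t, X (cc a, t) ≠ pat k (jj a) t → (cc a, t) ∈ B' a := by
      intro a t h
      by_contra hn
      exact h (hFout a t hn)
    have hFin' : ∀ a t, (cc a, t) ∈ B' a → X (cc a, t) ≠ pat k (jj a) t := by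
      intro a t h heq
      have h1 := hcj a t
      rw [show flipSet (B' a) X (cc a, t) = !X (cc a, t) from if_pos h, heq] at h1
      exact (Bool.not_ne_self _ h1).elim
    have hwit : ∀ a, ∃ t, (cc a, t) ∈ B' a := by
      intro a
      obtain ⟨t, ht⟩ := hrowfalse (cc a) (jj a)
      exact ⟨t, hFin a t ht⟩
    have hjj : ∀ a b, a ≠ b → cc a = cc b → jj a ≠ jj b := by
      intro a b hab hcc hjeq
      obtain ⟨t, ht⟩ := hwit a
      have hnb : (cc a, t) ∉ B' b := Finset.disjoint_left.mp (hdisj' a b hab) ht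
      have h1 : X (cc a, t) ≠ pat k (jj a) t := hFin' a t ht
      have h2 : X (cc b, t) = pat k (jj b) t := hFout b t (by rw [← hcc]; exact hnb)
      rw [← hcc, ← hjeq] at h2
      exact h1 h2
    have hfree4 : ∀ a b, a ≠ b → cc a = cc b → ∀ t : Fin (k ^ 2),
        (jj a).val * k ≤ t.val → t.val < (jj a).val * k + k → ρ (cc a, t) = none := by
      intro a b hab hcc t h1 h2
      have hja : pat k (jj a) t = true := decide_eq_true ⟨h1, h2⟩
      have hjb : pat k (jj b) t = false := by
        apply decide_eq_false
        intro hcon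
        exact interval_disj (hjj a b hab hcc) ⟨h1, h2⟩ hcon
      by_cases hx : X (cc a, t) = pat k (jj a) t
      · have hne2 : X (cc b, t) ≠ pat k (jj b) t := by
          rw [← hcc, hx, hja, hjb]; simp
        have := hfreeB b _ (hFin b t hne2)
        rwa [hcc]
      · exact hfreeB a _ (hFin a t hx)
    -- counting
    set p : Fin m → Prop := fun a => ∀ b, cc b = cc a → b = a with hp
    have hsplit : (Finset.univ.filter p).card
        + (Finset.univ.filter (fun a => ¬ p a)).card = m := by
      rw [Finset.card_filter_add_card_filter_not]
      simp
    have hS : (Finset.univ.filter p).card ≤ k ^ 2 := by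
      have hinj : Set.InjOn cc (Finset.univ.filter p) := by
        intro a ha b hb hab
        have ha' : p a := (Finset.mem_filter.mp ha).2
        exact (ha' b hab.symm).symm
      calc (Finset.univ.filter p).card
          = ((Finset.univ.filter p).image cc).card := (Finset.card_image_of_injOn hinj).symm
        _ ≤ (Finset.univ : Finset (Fin (k ^ 2))).card := Finset.card_le_card (Finset.subset_univ _)
        _ = k ^ 2 := by simp
    set T := Finset.univ.filter (fun a => ¬ p a) with hT
    let F : Fin m → Finset (Fin (k ^ 2) × Fin (k ^ 2)) := fun a =>
      ((Finset.Ico ((jj a).val * k) ((jj a).val * k + k)).attachFin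
        (fun t ht => lt_of_lt_of_le (Finset.mem_Ico.mp ht).2 (interval_ub (jj a)))).image
        (fun t => (cc a, t))
    have hmemF : ∀ a (q : Fin (k ^ 2) × Fin (k ^ 2)), q ∈ F a ↔
        q.1 = cc a ∧ (jj a).val * k ≤ q.2.val ∧ q.2.val < (jj a).val * k + k := by
      intro a q
      constructor
      · intro hq
        obtain ⟨t, ht, rfl⟩ := Finset.mem_image.mp hq
        have := Finset.mem_Ico.mp ((Finset.mem_attachFin _).mp ht)
        exact ⟨rfl, this.1, this.2⟩
      · rintro ⟨h1, h2, h3⟩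
        apply Finset.mem_image.mpr
        refine ⟨q.2, (Finset.mem_attachFin _).mpr (Finset.mem_Ico.mpr ⟨h2, h3⟩), ?_⟩
        rw [← h1]
    have hcardF : ∀ a, (F a).card = k := by
      intro a
      have hinj : Function.Injective (fun t : Fin (k ^ 2) => (cc a, t)) := by
        intro t1 t2 h
        simpa using congrArg Prod.snd h
      rw [Finset.card_image_of_injective _ hinj, Finset.card_attachFin, Nat.card_Ico]
      omega
    have hFdisj : ∀ a ∈ T, ∀ b ∈ T, a ≠ b → Disjoint (F a) (F b) := by
      intro a _ b _ hab
      rw [Finset.disjoint_left]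
      intro q hqa hqb
      obtain ⟨ha1, ha2, ha3⟩ := (hmemF a q).mp hqa
      obtain ⟨hb1, hb2, hb3⟩ := (hmemF b q).mp hqb
      have hcc : cc a = cc b := by rw [← ha1, hb1]
      exact interval_disj (hjj a b hab hcc) ⟨ha2, ha3⟩ ⟨hb2, hb3⟩
    have hFfree : ∀ a ∈ T, ∀ q ∈ F a, ρ q = none := by
      intro a haT q hq
      have hnp : ¬ p a := (Finset.mem_filter.mp haT).2
      obtain ⟨b, hbcc, hba⟩ : ∃ b, cc b = cc a ∧ b ≠ a := by
        by_contra hno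
        push_neg at hno
        exact hnp (fun b hb => hno b hb)
      obtain ⟨h1, h2, h3⟩ := (hmemF a q).mp hq
      have := hfree4 a b (fun he => hba (he ▸ rfl)) hbcc.symm q.2 h2 h3
      rwa [show q = (cc a, q.2) from Prod.ext h1 rfl]
    have hTcard : T.card * k ≤ C * k ^ 3 := by
      have hbu : (T.biUnion F).card = T.card * k := by
        rw [Finset.card_biUnion hFdisj]
        rw [Finset.sum_congr rfl (fun a _ => hcardF a), Finset.sum_const, smul_eq_mul]
      have hsub : T.biUnion F ⊆ Finset.univ.filter (fun i => ρ i = none) := by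
        intro q hq
        obtain ⟨a, haT, hqa⟩ := Finset.mem_biUnion.mp hq
        exact Finset.mem_filter.mpr ⟨Finset.mem_univ _, hFfree a haT q hqa⟩
      have hfcard : (Finset.univ.filter (fun i => ρ i = none)).card ≤ C * k ^ 3 := by
        rw [← Fintype.card_subtype]
        exact hfree
      calc T.card * k = (T.biUnion F).card := hbu.symm
        _ ≤ (Finset.univ.filter (fun i => ρ i = none)).card := Finset.card_le_card hsub
        _ ≤ C * k ^ 3 := hfcard
    have hT2 : T.card ≤ C * k ^ 2 := by
      have hk0 : 0 < k := by omega
      apply Nat.le_of_mul_le_mul_right _ hk0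
      calc T.card * k ≤ C * k ^ 3 := hTcard
        _ = C * k ^ 2 * k := by ring
    omega
  · -- 1-input case
    intro htrue
    rw [hval] at htrue
    obtain ⟨c0, j0, hc0⟩ := (bigRub_iff k X).mp htrue
    have hwit : ∀ a, ∃ t, (c0, t) ∈ B' a := by
      intro a
      by_contra hno
      push_neg at hno
      apply hsens' a
      rw [htrue]
      apply (bigRub_iff k _).mpr
      refine ⟨c0, j0, fun t => ?_⟩
      rw [show flipSet (B' a) X (c0, t) = X (c0, t) from if_neg (hno t)]
      exact hc0 t
    choose w hw using hwit
    have hinj : Function.Injective w := by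
      intro a b hab
      by_contra hne
      have h1 := hw a
      have h2 := hw b
      rw [← hab] at h2
      exact Finset.disjoint_left.mp (hdisj' a b hne) h1 h2
    calc m = Fintype.card (Fin m) := (Fintype.card_fin m).symm
      _ ≤ Fintype.card (Fin (k ^ 2)) := Fintype.card_le_of_injective w hinj
      _ = k ^ 2 := Fintype.card_fin _
end

section
/- The 0-query complexity of TRIBES_n (the AND of n disjoint ORs of n variables each) is exactly n² − n + 1: every decision tree computing TRIBES_n has some root-to-leaf path along which at least n² − n + 1 queries are answered 0, and there is a decision tree computing TRIBES_n whose every root-to-leaf path has at most n² − n + 1 queries answered 0. -/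
/-!
Upper bound: read the rows one after another, stopping a row at its first `1`; a path meets at
most `n - 1` zeros in every row except the last row it reads.

Lower bound: an adversary answers `0` unless the queried variable is the last free one of a
row that is still unsatisfied while some other row is unsatisfied too, in which case it answers
`1` and that row drops out. Every `0` answer fixes one free variable of the unsatisfied rows,
every `1` answer fixes one while removing one row, and the tree cannot stop while an unsatisfied
row has a free variable. So with `N` free variables in `m` unsatisfied rows, at least
`N - m + 1` zeros are forced; initially `N = n²` and `m = n`.
-/

def cnf {I ι : Type*} (R : Finset ι) (C : ι → Finset I) (x : I → Bool) : Bool :=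
  decide (∀ r ∈ R, ∃ i ∈ C r, x i = true)

lemma cnf_erase_of_mem {I ι : Type*} [DecidableEq ι] {R : Finset ι} {C : ι → Finset I}
    {r : ι} {p : I} {x : I → Bool} (hp : p ∈ C r) (hx : x p = true) :
    cnf (R.erase r) C x = cnf R C x := by
  simp only [cnf, decide_eq_decide]
  refine ⟨fun h r' hr' => ?_, fun h r' hr' => h r' (Finset.mem_of_mem_erase hr')⟩
  by_cases hrr : r' = r
  · exact hrr ▸ ⟨p, hp, hx⟩
  · exact h r' (Finset.mem_erase.2 ⟨hrr, hr'⟩)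

lemma biUnion_erase_sdiff_insert {I ι : Type*} [DecidableEq I] [DecidableEq ι]
    {C : ι → Finset I} {R : Finset ι} {D : Finset I} {r : ι} {p : I}
    (hsingle : C r \ D = {p}) :
    (R.erase r).biUnion C \ insert p D = R.biUnion C \ insert p D := by
  ext q
  simp only [Finset.mem_sdiff, Finset.mem_biUnion, Finset.mem_insert, Finset.mem_erase]
  constructor
  · rintro ⟨⟨r', ⟨-, hr'⟩, hq⟩, hqD⟩
    exact ⟨⟨r', hr', hq⟩, hqD⟩
  · rintro ⟨⟨r', hr', hq⟩, hqD⟩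
    refine ⟨⟨r', ⟨fun hrr => ?_, hr'⟩, hq⟩, hqD⟩
    have : q ∈ C r \ D := Finset.mem_sdiff.2 ⟨hrr ▸ hq, fun hq' => hqD (Or.inr hq')⟩
    exact hqD (Or.inl (by simpa [hsingle] using this))

namespace DTree
variable {I : Type*}

def ComputesOn (T : DTree I) (f : (I → Bool) → Bool) (D : Finset I) (a : I → Bool) : Prop :=
  ∀ x, (∀ i ∈ D, x i = a i) → T.eval x = f x

lemma ComputesOn.congr {T : DTree I} {f g : (I → Bool) → Bool} {D : Finset I} {a : I → Bool}
    (hT : T.ComputesOn f D a) (hfg : ∀ x, (∀ i ∈ D, x i = a i) → f x = g x) :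
    T.ComputesOn g D a :=
  fun x hx => (hT x hx).trans (hfg x hx)

lemma ComputesOn.child [DecidableEq I] {p : I} {t0 t1 : DTree I} {f : (I → Bool) → Bool}
    {D : Finset I} {a : I → Bool} (hT : (node p t0 t1).ComputesOn f D a) {b : Bool}
    (hb : p ∉ D ∨ a p = b) :
    (cond b t1 t0).ComputesOn f (insert p D) (Function.update a p b) := by
  intro x hx
  have hxp : x p = b := by simpa using hx p (Finset.mem_insert_self p D)
  have hxD : ∀ i ∈ D, x i = a i := by
    intro i hi
    rcases eq_or_ne i p with rfl | hip
    · exact hxp.trans (hb.resolve_left (not_not.2 hi)).symm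
    · simpa [Function.update_of_ne hip] using hx i (Finset.mem_insert_of_mem hi)
  rw [← hT x hxD, eval, hxp]
  cases b <;> rfl

def ifAny : List I → DTree I → DTree I → DTree I
  | [], _, no => no
  | i :: is, yes, no => node i (ifAny is yes no) yes

lemma eval_ifAny (is : List I) (yes no : DTree I) (x : I → Bool) :
    (ifAny is yes no).eval x = if ∃ i ∈ is, x i = true then yes.eval x else no.eval x := by
  induction is with
  | nil => simp [ifAny]
  | cons i is ih => cases hi : x i <;> simp [ifAny, eval, hi, ih]

lemma zeroDepth_ifAny_le (is : List I) (yes no : DTree I) :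
    (ifAny is yes no).zeroDepth ≤
      max (no.zeroDepth + is.length) (yes.zeroDepth + is.length - 1) := by
  induction is with
  | nil => simp [ifAny]
  | cons i is ih => simp only [ifAny, zeroDepth, List.length_cons]; omega

def ofCNF : List (List I) → DTree I
  | [] => leaf true
  | c :: cs => ifAny c (ofCNF cs) (leaf false)

lemma eval_ofCNF (cs : List (List I)) (x : I → Bool) :
    (ofCNF cs).eval x = decide (∀ c ∈ cs, ∃ i ∈ c, x i = true) := by
  induction cs with
  | nil => simp [ofCNF, eval]
  | cons c cs ih => by_cases hc : ∃ i ∈ c, x i = true <;> simp [ofCNF, eval_ifAny, eval, hc, ih]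

lemma zeroDepth_ofCNF_le (cs : List (List I)) :
    (ofCNF cs).zeroDepth ≤ (cs.map fun c => c.length - 1).sum + 1 := by
  induction cs with
  | nil => simp [ofCNF, zeroDepth]
  | cons c cs ih =>
    have := zeroDepth_ifAny_le c (ofCNF cs) (leaf false)
    simp only [ofCNF, zeroDepth, List.map_cons, List.sum_cons] at this ⊢
    omega

end DTree

section Adversary
variable {I ι : Type*} [DecidableEq I]

structure OpenClauses (C : ι → Finset I) (R : Finset ι) (D : Finset I) (a : I → Bool) :
    Prop where
  nonempty : R.Nonempty
  disjoint : (R : Set ι).PairwiseDisjoint C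
  free : ∀ r ∈ R, (C r \ D).Nonempty
  eq_false : ∀ r ∈ R, ∀ i ∈ C r, i ∈ D → a i = false

namespace OpenClauses
variable {C : ι → Finset I} {R : Finset ι} {D : Finset I} {a : I → Bool}

lemma not_computesOn_leaf (h : OpenClauses C R D a) (b : Bool) :
    ¬ (DTree.leaf b).ComputesOn (cnf R C) D a := by
  intro hT
  let fill (c : Bool) : I → Bool := fun i => if i ∈ D then a i else c
  have hfill (c : Bool) : ∀ i ∈ D, fill c i = a i := fun i hi => if_pos hi
  have hone : cnf R C (fill true) = true := by
    refine decide_eq_true fun r hr => ?_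
    obtain ⟨q, hq⟩ := h.free r hr
    exact ⟨q, (Finset.mem_sdiff.1 hq).1, if_neg (Finset.mem_sdiff.1 hq).2⟩
  have hzero : cnf R C (fill false) = false := by
    refine decide_eq_false fun hall => ?_
    obtain ⟨r, hr⟩ := h.nonempty
    obtain ⟨i, hi, hxi⟩ := hall r hr
    by_cases hiD : i ∈ D
    · simp [fill, hiD, h.eq_false r hr i hi hiD] at hxi
    · simp [fill, hiD] at hxi
  have := (hT (fill true) (hfill true)).symm.trans (hT (fill false) (hfill false))
  simp [hone, hzero] at this

lemma notMem_of_ne (h : OpenClauses C R D a) {r r' : ι} (hr : r ∈ R) (hr' : r' ∈ R)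
    (hne : r' ≠ r) {p : I} (hp : p ∈ C r) : p ∉ C r' :=
  fun hp' => hne (h.disjoint.elim_finset hr' hr p hp' hp)

lemma insert_of_notMem (h : OpenClauses C R D a) {p : I} (hp : p ∉ R.biUnion C \ D) :
    OpenClauses C R (insert p D) a := by
  have hpC : ∀ r ∈ R, p ∈ C r → p ∈ D := fun r hr hpr => by
    by_contra hpD
    exact hp (Finset.mem_sdiff.2 ⟨Finset.mem_biUnion.2 ⟨r, hr, hpr⟩, hpD⟩)
  refine ⟨h.nonempty, h.disjoint, fun r hr => ?_, fun r hr i hi hiD => ?_⟩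
  · by_cases hpr : p ∈ C r
    · simpa [Finset.insert_eq_of_mem (hpC r hr hpr)] using h.free r hr
    · simpa [Finset.sdiff_insert_of_notMem hpr] using h.free r hr
  · rcases Finset.mem_insert.1 hiD with rfl | hiD
    · exact h.eq_false r hr i hi (hpC r hr hi)
    · exact h.eq_false r hr i hi hiD

lemma insert_false (h : OpenClauses C R D a) {r : ι} (hr : r ∈ R) {p : I} (hp : p ∈ C r)
    (hnt : (C r \ D).Nontrivial) :
    OpenClauses C R (insert p D) (Function.update a p false) := by
  refine ⟨h.nonempty, h.disjoint, fun r' hr' => ?_, fun r' hr' i hi hiD => ?_⟩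
  · rw [Finset.sdiff_insert]
    by_cases hrr : r' = r
    · exact hrr ▸ hnt.erase_nonempty
    · rw [Finset.erase_eq_of_notMem fun hp' =>
        h.notMem_of_ne hr hr' hrr hp (Finset.mem_sdiff.1 hp').1]
      exact h.free r' hr'
  · rcases eq_or_ne i p with rfl | hip
    · exact Function.update_self ..
    · rw [Function.update_of_ne hip]
      exact h.eq_false r' hr' i hi ((Finset.mem_insert.1 hiD).resolve_left hip)

lemma erase_insert_true [DecidableEq ι] (h : OpenClauses C R D a) {r : ι} (hr : r ∈ R) {p : I}
    (hp : p ∈ C r) (hR : (R.erase r).Nonempty) :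
    OpenClauses C (R.erase r) (insert p D) (Function.update a p true) := by
  have hp' : ∀ r' ∈ R.erase r, p ∉ C r' := fun r' hr' =>
    h.notMem_of_ne hr (Finset.mem_of_mem_erase hr') (Finset.ne_of_mem_erase hr') hp
  refine ⟨hR, h.disjoint.subset (by simp), fun r' hr' => ?_, fun r' hr' i hi hiD => ?_⟩
  · rw [Finset.sdiff_insert_of_notMem (hp' r' hr')]
    exact h.free r' (Finset.mem_of_mem_erase hr')
  · have hip : i ≠ p := fun hip => hp' r' hr' (hip ▸ hi)
    rw [Function.update_of_ne hip]
    exact h.eq_false r' (Finset.mem_of_mem_erase hr') i hi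
      ((Finset.mem_insert.1 hiD).resolve_left hip)

theorem card_add_one_le_zeroDepth [DecidableEq ι] (T : DTree I) (h : OpenClauses C R D a)
    (hT : T.ComputesOn (cnf R C) D a) :
    (R.biUnion C \ D).card + 1 ≤ T.zeroDepth + R.card := by
  induction T generalizing R D a with
  | leaf b => exact absurd hT (h.not_computesOn_leaf b)
  | node p t0 t1 ih0 ih1 =>
    simp only [DTree.zeroDepth]
    by_cases hpU : p ∈ R.biUnion C \ D
    · obtain ⟨hpC, hpD⟩ := Finset.mem_sdiff.1 hpU
      obtain ⟨r, hr, hpr⟩ := Finset.mem_biUnion.1 hpC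
      have hpU' : p ∈ C r \ D := Finset.mem_sdiff.2 ⟨hpr, hpD⟩
      have hcard : (R.biUnion C \ insert p D).card + 1 = (R.biUnion C \ D).card := by
        rw [Finset.sdiff_insert, Finset.card_erase_add_one hpU]
      rcases (h.free r hr).exists_eq_singleton_or_nontrivial with ⟨q, hsingle⟩ | hnt
      · obtain rfl : p = q := by simpa [hsingle] using hpU'
        rcases (R.erase r).eq_empty_or_nonempty with hR | hR
        · obtain rfl : R = {r} :=
            ((Finset.erase_eq_empty_iff R r).1 hR).resolve_left (Finset.ne_empty_of_mem hr)
          simp [hsingle]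
        · have hT1 := (hT.child (b := true) (Or.inl hpD)).congr fun x hx =>
            (cnf_erase_of_mem hpr (by simpa using hx p (Finset.mem_insert_self _ _))).symm
          have := ih1 (h.erase_insert_true hr hpr hR) hT1
          rw [biUnion_erase_sdiff_insert hsingle] at this
          have := Finset.card_erase_add_one hr
          omega
      · have := ih0 (h.insert_false hr hpr hnt) (hT.child (b := false) (Or.inl hpD))
        omega
    · have hU : R.biUnion C \ insert p D = R.biUnion C \ D := by
        rw [Finset.sdiff_insert, Finset.erase_eq_of_notMem hpU]
      have h' := h.insert_of_notMem hpU
      have hTc := hT.child (b := a p) (Or.inr rfl)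
      rw [Function.update_eq_self] at hTc
      cases hap : a p <;> rw [hap] at hTc
      · have := ih0 h' hTc
        rw [hU] at this
        omega
      · have := ih1 h' hTc
        rw [hU] at this
        omega

end OpenClauses
end Adversary

def tribesRow (n : ℕ) (i : Fin n) : Finset (Fin n × Fin n) :=
  Finset.univ.image fun j => (i, j)

lemma cnf_tribesRow (n : ℕ) (x : Fin n × Fin n → Bool) :
    cnf Finset.univ (tribesRow n) x = tribes n x := by
  simp [cnf, tribes, tribesRow]

lemma openClauses_tribesRow {n : ℕ} (hn : 1 ≤ n) (a : Fin n × Fin n → Bool) :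
    OpenClauses (tribesRow n) Finset.univ ∅ a where
  nonempty := ⟨⟨0, hn⟩, Finset.mem_univ _⟩
  disjoint := fun i _ i' _ hii' => by
    simp only [Function.onFun, tribesRow, Finset.disjoint_left, Finset.mem_image]
    rintro _ ⟨j, -, rfl⟩ ⟨j', -, hj'⟩
    exact hii' (congrArg Prod.fst hj').symm
  free i _ := by simp [tribesRow, Finset.univ_nonempty_iff.2 ⟨(⟨0, hn⟩ : Fin n)⟩]
  eq_false _ _ _ _ h := absurd h (Finset.notMem_empty _)

lemma le_zeroDepth_of_eval_eq_tribes {n : ℕ} (hn : 1 ≤ n) (T : DTree (Fin n × Fin n))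
    (hT : ∀ x, T.eval x = tribes n x) : n ^ 2 - n + 1 ≤ T.zeroDepth := by
  have hbound := (openClauses_tribesRow hn fun _ => false).card_add_one_le_zeroDepth T
    fun x _ => (hT x).trans (cnf_tribesRow n x).symm
  have hall : Finset.univ.biUnion (tribesRow n) = Finset.univ := by
    ext ⟨i, j⟩; simp [tribesRow]
  simp only [hall, Finset.sdiff_empty, Finset.card_univ, Fintype.card_prod,
    Fintype.card_fin] at hbound
  have := Nat.le_mul_self n
  rw [sq]
  omega

lemma exists_zeroDepth_le_of_eval_eq_tribes (n : ℕ) :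
    ∃ T : DTree (Fin n × Fin n), (∀ x, T.eval x = tribes n x) ∧
      T.zeroDepth ≤ n ^ 2 - n + 1 := by
  refine ⟨DTree.ofCNF ((List.finRange n).map fun i => (List.finRange n).map fun j => (i, j)),
    fun x => ?_, ?_⟩
  · simp [DTree.eval_ofCNF, tribes]
  · have := DTree.zeroDepth_ofCNF_le ((List.finRange n).map fun i =>
      (List.finRange n).map fun j => (i, j))
    simpa [Function.comp_def, sq, Nat.mul_sub_one] using this

/-- the 0-query complexity of `TRIBES_n` is exactly `n² - n + 1`: some decision
tree computing it has 0-depth `n² - n + 1`, and every decision tree computing it has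
0-depth at least `n² - n + 1`. -/
theorem stmt13 (n : ℕ) (hn : 1 ≤ n) :
    IsLeast {d | ∃ T : DTree (Fin n × Fin n),
      (∀ x, T.eval x = tribes n x) ∧ T.zeroDepth = d} (n ^ 2 - n + 1) := by
  obtain ⟨T, hT, hle⟩ := exists_zeroDepth_le_of_eval_eq_tribes n
  refine ⟨⟨T, hT, le_antisymm hle (le_zeroDepth_of_eval_eq_tribes hn T hT)⟩, ?_⟩
  rintro _ ⟨T', hT', rfl⟩
  exact le_zeroDepth_of_eval_eq_tribes hn T' hT'
end

section
/- For every Boolean function f, the 0-query complexity is at most the AND-query complexity: D⁰(f) ≤ D^∧(f). -/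
namespace Stmt15Aux
variable {I : Type*} [DecidableEq I]

set_option linter.unusedSectionVars false

/-- Chain of single-bit queries simulating an AND of a list. -/
def chain : List I → DTree I → DTree I → DTree I
  | [], _, t1 => t1
  | i :: l, t0, t1 => .node i t0 (chain l t0 t1)

theorem chain_eval (l : List I) (t0 t1 : DTree I) (x : I → Bool) :
    (chain l t0 t1).eval x =
      if ∀ i ∈ l, x i = true then t1.eval x else t0.eval x := by
  induction l with
  | nil => simp [chain]
  | cons i l ih =>
    simp only [chain, DTree.eval, ih]
    cases h : x i <;> simp [h]

theorem chain_zeroDepth (l : List I) (t0 t1 : DTree I) :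
    (chain l t0 t1).zeroDepth ≤ max (t0.zeroDepth + 1) t1.zeroDepth := by
  induction l with
  | nil => exact le_max_right _ _
  | cons i l ih =>
    simp only [chain, DTree.zeroDepth]
    exact max_le (le_max_left _ _) ih

/-- Convert an AND-decision tree to a plain decision tree. -/
noncomputable def convert : ADTree I → DTree I
  | .leaf b => .leaf b
  | .node S t0 t1 => chain S.toList (convert t0) (convert t1)

theorem convert_eval (T : ADTree I) (x : I → Bool) :
    (convert T).eval x = T.eval x := by
  induction T with
  | leaf b => simp [convert, DTree.eval, ADTree.eval]
  | node S t0 t1 ih0 ih1 =>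
    simp only [convert, chain_eval, ADTree.eval, ih0, ih1, Finset.mem_toList]

theorem convert_zeroDepth (T : ADTree I) :
    (convert T).zeroDepth ≤ T.depth := by
  induction T with
  | leaf b => simp [convert, DTree.zeroDepth, ADTree.depth]
  | node S t0 t1 ih0 ih1 =>
    simp only [convert, ADTree.depth]
    refine (chain_zeroDepth _ _ _).trans (max_le ?_ ?_)
    · exact Nat.add_le_add_right (ih0.trans (le_max_left _ _)) 1
    · exact le_trans (ih1.trans (le_max_right _ _)) (Nat.le_succ _)

/-- Full AND-decision tree over a list of variables. -/
def buildA : List I → ((I → Bool) → Bool) → ADTree I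
  | [], f => .leaf (f fun _ => false)
  | i :: l, f => .node {i} (buildA l fun x => f (Function.update x i false))
      (buildA l fun x => f (Function.update x i true))

theorem buildA_eval (l : List I) (f : (I → Bool) → Bool)
    (hf : ∀ x y : I → Bool, (∀ j ∈ l, x j = y j) → f x = f y) (x : I → Bool) :
    (buildA l f).eval x = f x := by
  induction l generalizing f with
  | nil => exact (hf _ _ (by simp)).symm
  | cons i l ih =>
    have key : ∀ b : Bool, x i = b →
        (buildA l fun y => f (Function.update y i b)).eval x = f x := by
      intro b hb
      have hf' : ∀ a c : I → Bool, (∀ j ∈ l, a j = c j) →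
          f (Function.update a i b) = f (Function.update c i b) := by
        intro a c hac
        apply hf
        intro j hj
        by_cases hji : j = i
        · subst hji; simp
        · rcases List.mem_cons.mp hj with rfl | hj
          · exact absurd rfl hji
          · simp [Function.update_of_ne hji, hac j hj]
      rw [ih _ hf', ← hb, Function.update_eq_self]
    simp only [buildA, ADTree.eval]
    cases h : x i with
    | false =>
      rw [if_neg (by simp [h]), key false h]
    | true =>
      rw [if_pos (by simp [h]), key true h]

end Stmt15Aux

/-- for every Boolean function, the 0-query complexity is at most the
AND-query complexity. -/
theorem stmt15 (n : ℕ) (f : (Fin n → Bool) → Bool) : zeroQuery f ≤ andQuery f := by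
  have hne : {d | ∃ T : ADTree (Fin n), (∀ x, T.eval x = f x) ∧ T.depth = d}.Nonempty := by
    refine ⟨(Stmt15Aux.buildA (Finset.univ : Finset (Fin n)).toList f).depth,
      Stmt15Aux.buildA _ f, fun x => ?_, rfl⟩
    exact Stmt15Aux.buildA_eval _ f (fun x y h => by
      congr 1; funext j; exact h j (by simp)) x
  obtain ⟨T, hT, hd⟩ := Nat.sInf_mem hne
  calc zeroQuery f ≤ (Stmt15Aux.convert T).zeroDepth :=
        Nat.sInf_le ⟨Stmt15Aux.convert T,
          fun x => (Stmt15Aux.convert_eval T x).trans (hT x), rfl⟩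
    _ ≤ T.depth := Stmt15Aux.convert_zeroDepth T
    _ = andQuery f := hd
end

section
/- For every Boolean function f on n variables, the AND-query complexity is at most the 0-query complexity times log(n+1): D^∧(f) ≤ D⁰(f)·log₂(n+1). -/
/-!
On input `x`, a decision tree follows its all-ones path until the first query answered `0`, and
then continues in a subtree of smaller `0`-depth. Skipping repeated variables, the all-ones path
queries at most `n` distinct variables, so the position of its first `0` (or its absence) is one of
at most `n + 1` outcomes, which a binary search finds with `⌈log₂ (n + 1)⌉` AND queries of
prefixes. Recursing into the subtree reached gives depth `D⁰(f) · ⌈log₂ (n + 1)⌉`.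
-/

namespace List
variable {α : Type*} {p : α → Bool} {l : List α} {n : ℕ}

theorem le_findIdx_iff (hn : n ≤ l.length) :
    n ≤ l.findIdx p ↔ ∀ a ∈ l.take n, p a = false := by
  rw [← findIdx_eq_length, findIdx_take, length_take]
  omega

theorem findIdx_eq_add_findIdx_drop (hn : n ≤ l.findIdx p) :
    l.findIdx p = n + (l.drop n).findIdx p := by
  have := l.findIdx_le_length (p := p)
  conv_lhs => rw [← take_append_drop n l]
  rw [findIdx_append, findIdx_take, length_take]
  split_ifs <;> omega

end List

namespace DTree
variable {I : Type*} [DecidableEq I]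

theorem exists_eval_eq_of_dependsOn (s : Finset I) :
    ∀ f : (I → Bool) → Bool, (∀ x y, (∀ i ∈ s, x i = y i) → f x = f y) →
      ∃ T : DTree I, ∀ x, T.eval x = f x := by
  induction s using Finset.induction_on with
  | empty => exact fun f hf => ⟨leaf (f fun _ => false), fun x => hf _ _ (by simp)⟩
  | insert i s _ ih =>
    intro f hf
    have hdep (b : Bool) : ∀ x y, (∀ j ∈ s, x j = y j) →
        f (Function.update x i b) = f (Function.update y i b) := by
      intro x y hxy
      refine hf _ _ fun j hj => ?_
      by_cases hji : j = i
      · simp [hji]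
      · simp [Function.update_of_ne hji, hxy j (by simpa [hji] using hj)]
    obtain ⟨T₀, hT₀⟩ := ih _ (hdep false)
    obtain ⟨T₁, hT₁⟩ := ih _ (hdep true)
    refine ⟨node i T₀ T₁, fun x => ?_⟩
    have hupd : Function.update x i (x i) = x := Function.update_eq_self i x
    cases hx : x i <;> simp only [eval, hx, hT₀, hT₁, cond_false, cond_true] <;>
      rw [← hx, hupd]

theorem exists_eval_eq [Fintype I] (f : (I → Bool) → Bool) :
    ∃ T : DTree I, ∀ x, T.eval x = f x :=
  exists_eval_eq_of_dependsOn Finset.univ f fun _ _ hxy =>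
    congrArg f (funext fun i => hxy i (Finset.mem_univ i))

/- Along the all-ones path, queries of variables in `s` (already answered `1`) are skipped, so
`onesPath s T` lists each variable at most once. `exitBranch s T j` is the subtree entered when
the `j`-th listed query is answered `0`, or the final leaf of the path when `j` is past its end. -/
def onesPath (s : Finset I) : DTree I → List I
  | leaf _ => []
  | node i _ t₁ => if i ∈ s then onesPath s t₁ else i :: onesPath (insert i s) t₁

def exitBranch (s : Finset I) : DTree I → ℕ → DTree I
  | leaf b, _ => leaf b
  | node i t₀ t₁, j =>
    if i ∈ s then exitBranch s t₁ j else
      match j with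
      | 0 => t₀
      | j + 1 => exitBranch (insert i s) t₁ j

theorem length_onesPath_le [Fintype I] (s : Finset I) (T : DTree I) :
    (onesPath s T).length ≤ sᶜ.card := by
  induction T generalizing s with
  | leaf => simp [onesPath]
  | node i t₀ t₁ _ ih₁ =>
    by_cases hi : i ∈ s
    · simpa [onesPath, hi] using ih₁ s
    · have hcard : (insert i s)ᶜ.card + 1 = sᶜ.card := by
        rw [Finset.compl_insert, Finset.card_erase_add_one (by simpa using hi)]
      have := ih₁ (insert i s)
      simp only [onesPath, hi, if_false, List.length_cons]
      omega

theorem zeroDepth_exitBranch_le (s : Finset I) (T : DTree I) (j : ℕ) :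
    (exitBranch s T j).zeroDepth ≤ T.zeroDepth - 1 := by
  induction T generalizing s j with
  | leaf => simp [exitBranch, zeroDepth]
  | node i t₀ t₁ _ ih₁ =>
    unfold exitBranch
    split_ifs
    · have := ih₁ s j
      simp only [zeroDepth]; omega
    · cases j with
      | zero => simp only [zeroDepth]; omega
      | succ j =>
        have := ih₁ (insert i s) j
        simp only [zeroDepth]; omega

theorem eval_exitBranch (s : Finset I) (T : DTree I) (x : I → Bool)
    (hs : ∀ i ∈ s, x i = true) :
    (exitBranch s T ((onesPath s T).findIdx fun i => !x i)).eval x = T.eval x := by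
  induction T generalizing s with
  | leaf => rfl
  | node i t₀ t₁ _ ih₁ =>
    by_cases hi : i ∈ s
    · simp [onesPath, exitBranch, eval, hi, hs i hi, ih₁ s hs]
    · cases hx : x i
      · simp [onesPath, exitBranch, eval, hi, hx, List.findIdx_cons]
      · have hs' : ∀ j ∈ insert i s, x j = true := by simpa [hx] using hs
        simp [onesPath, exitBranch, eval, hi, hx, List.findIdx_cons, ih₁ _ hs']

end DTree

namespace ADTree
variable {I : Type*} [DecidableEq I]

theorem exists_eval_eq_findIdx {D : ℕ} :
    ∀ (k : ℕ) (A : ℕ → ADTree I), (∀ j, (A j).depth ≤ D) →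
      ∀ K : List I, K.length < 2 ^ k →
      ∃ T : ADTree I, T.depth ≤ k + D ∧ ∀ x, T.eval x = (A (K.findIdx fun i => !x i)).eval x
  | 0, A, hA, K, hK => by
    obtain rfl : K = [] := List.length_eq_zero_iff.1 (by simpa using hK)
    exact ⟨A 0, by simpa using hA 0, fun x => rfl⟩
  | k + 1, A, hA, K, hK => by
    by_cases hshort : K.length < 2 ^ k
    · obtain ⟨T, hd, he⟩ := exists_eval_eq_findIdx k A hA K hshort
      exact ⟨T, by omega, he⟩
    -- If the AND of the first `2 ^ k` variables fails, the first `0` is among them; searching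
    -- the first `2 ^ k - 1` then suffices, since finding none there means it is the last one.
    obtain ⟨T₀, hd₀, he₀⟩ := exists_eval_eq_findIdx k A hA (K.take (2 ^ k - 1)) (by simp)
    obtain ⟨T₁, hd₁, he₁⟩ :=
      exists_eval_eq_findIdx k (fun j => A (2 ^ k + j)) (fun _ => hA _) (K.drop (2 ^ k))
        (by simp [pow_succ] at hK ⊢; omega)
    refine ⟨node (K.take (2 ^ k)).toFinset T₀ T₁, by simp only [depth]; omega, fun x => ?_⟩
    have hquery : (∀ i ∈ (K.take (2 ^ k)).toFinset, x i = true) ↔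
        2 ^ k ≤ K.findIdx fun i => !x i := by
      rw [List.le_findIdx_iff (by omega)]
      simp
    simp only [eval, hquery]
    split_ifs with h
    · rw [he₁, ← List.findIdx_eq_add_findIdx_drop h]
    · rw [he₀, List.findIdx_take, min_eq_right (by omega)]

theorem exists_eval_eq_of_zeroDepth_le [Fintype I] {c : ℕ}
    (hc : Fintype.card I < 2 ^ c) :
    ∀ (d : ℕ) (T : DTree I), T.zeroDepth ≤ d →
      ∃ A : ADTree I, A.depth ≤ d * c ∧ ∀ x, A.eval x = T.eval x
  | 0, .leaf b, _ => ⟨leaf b, by simp [depth], fun _ => rfl⟩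
  | 0, .node _ _ _, hT => by simp [DTree.zeroDepth] at hT
  | d + 1, T, hT => by
    choose A hAd hA using fun j =>
      exists_eval_eq_of_zeroDepth_le hc d (T.exitBranch ∅ j)
        ((DTree.zeroDepth_exitBranch_le ∅ T j).trans (by omega))
    obtain ⟨S, hSd, hS⟩ := exists_eval_eq_findIdx c A hAd (T.onesPath ∅)
      ((DTree.length_onesPath_le ∅ T).trans_lt (by simpa using hc))
    exact ⟨S, by rw [add_mul, one_mul, add_comm]; exact hSd,
      fun x => by rw [hS, hA, DTree.eval_exitBranch ∅ T x (by simp)]⟩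

end ADTree

theorem andQuery_le_zeroQuery_mul {I : Type*} [Fintype I] [DecidableEq I]
    (f : (I → Bool) → Bool) {c : ℕ} (hc : Fintype.card I < 2 ^ c) :
    andQuery f ≤ zeroQuery f * c := by
  obtain ⟨T₀, hT₀⟩ := DTree.exists_eval_eq f
  obtain ⟨T, hT, hTd⟩ :
      zeroQuery f ∈ {d | ∃ T : DTree I, (∀ x, T.eval x = f x) ∧ T.zeroDepth = d} :=
    Nat.sInf_mem ⟨_, T₀, hT₀, rfl⟩
  obtain ⟨A, hAd, hA⟩ := ADTree.exists_eval_eq_of_zeroDepth_le hc _ T hTd.le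
  calc andQuery f ≤ A.depth := Nat.sInf_le ⟨A, fun x => (hA x).trans (hT x), rfl⟩
    _ ≤ zeroQuery f * c := hAd

/-- for every Boolean function on `n` variables, the AND-query complexity is at
most the 0-query complexity times `log₂(n+1)`. -/
theorem stmt16 (n : ℕ) (f : (Fin n → Bool) → Bool) :
    andQuery f ≤ zeroQuery f * Nat.clog 2 (n + 1) :=
  andQuery_le_zeroQuery_mul f (by simpa using Nat.le_pow_clog one_lt_two (n + 1))
end

section
/- Suppose that for every Boolean function h, bs(h) ≤ c·s(h)² for some universal constant c > 0. Then for every Boolean function f there exists a restriction ρ to s(f) free variables such that bs(f|_ρ) = Ω(√(bs(f))). Contrapositively, if some f admits no restriction to O(s(f)) variables with block sensitivity Ω(√(bs(f))), then f witnesses a super-quadratic gap between bs and s. -/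
section Aux
variable {I : Type*} [Fintype I] [DecidableEq I]

lemma flipSet_singleton (i : I) (x : I → Bool) : flipSet {i} x = flipOne i x := by
  funext j
  by_cases h : j = i <;> simp [flipSet, flipOne, Function.update, h]

lemma flipSet_empty (x : I → Bool) : flipSet (∅ : Finset I) x = x := by
  funext j; simp [flipSet]

lemma bsSet_bdd (f : (I → Bool) → Bool) :
    ∀ m ∈ {m | ∃ x, SensBlocks f x m}, m ≤ Fintype.card I := by
  rintro m ⟨x, B, hdisj, hsens⟩
  have hne : ∀ a, (B a).Nonempty := by
    intro a
    rcases (B a).eq_empty_or_nonempty with h | h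
    · exact absurd (by rw [h, flipSet_empty]) (hsens a)
    · exact h
  choose g hg using hne
  have hinj : Function.Injective g := by
    intro a b hab
    by_contra hne'
    exact (Finset.disjoint_left.mp (hdisj a b hne') (hg a)) (hab ▸ hg b)
  simpa using Fintype.card_le_of_injective g hinj

lemma sensAt_le_bsF (f : (I → Bool) → Bool) (x : I → Bool) : sensAt f x ≤ bsF f := by
  apply le_csSup ⟨Fintype.card I, fun m hm => bsSet_bdd f m hm⟩
  refine ⟨x, ?_⟩
  refine ⟨fun a => {((Finset.univ.filter fun i =>
      f (flipOne i x) ≠ f x).equivFin.symm a : I)}, ?_, ?_⟩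
  · intro a b hab
    rw [Finset.disjoint_singleton]
    intro h
    exact hab ((Finset.univ.filter fun i => f (flipOne i x) ≠ f x).equivFin.symm.injective
      (Subtype.ext h))
  · intro a
    rw [flipSet_singleton]
    have := ((Finset.univ.filter fun i => f (flipOne i x) ≠ f x).equivFin.symm a).2
    rw [Finset.mem_filter] at this
    exact this.2

end Aux

/-- if `bs(h) ≤ c·s(h)²` for every Boolean function `h`, then every `f` admits
a restriction to `s(f)` free variables with block sensitivity `Ω(√(bs f))`. -/
theorem stmt18 (c : ℝ) (hc : 0 < c)
    (H : ∀ (n : ℕ) (h : (Fin n → Bool) → Bool), (bsF h : ℝ) ≤ c * (sensF h : ℝ) ^ 2) :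
    ∃ c' : ℝ, 0 < c' ∧ ∀ (n : ℕ) (f : (Fin n → Bool) → Bool),
      ∃ ρ : Fin n → Option Bool,
        Fintype.card {i : Fin n // ρ i = none} = sensF f ∧
        c' * Real.sqrt (bsF f) ≤ (bsF (restrictTo ρ f) : ℝ) := by
  have hsc : 0 < Real.sqrt c := Real.sqrt_pos.mpr hc
  refine ⟨(Real.sqrt c)⁻¹, inv_pos.mpr hsc, fun n f => ?_⟩
  classical
  -- choose a sensitivity-maximizing input
  obtain ⟨x, hx⟩ : ∃ x, sensAt f x = sensF f := by
    have hbdd : BddAbove (Set.range (sensAt f)) := by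
      refine ⟨n, ?_⟩
      rintro m ⟨x, rfl⟩
      exact le_trans (Finset.card_filter_le _ _) (by simp)
    exact Nat.sSup_mem (Set.range_nonempty _) hbdd
  set S : Finset (Fin n) := Finset.univ.filter (fun i => f (flipOne i x) ≠ f x) with hS
  set ρ : Fin n → Option Bool := fun i => if i ∈ S then none else some (x i) with hρ
  have hnone : ∀ i, ρ i = none ↔ i ∈ S := by
    intro i; by_cases h : i ∈ S <;> simp [hρ, h]
  have hcard : Fintype.card {i : Fin n // ρ i = none} = sensF f := by
    rw [Fintype.card_subtype, ← hx]
    congr 1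
    ext i
    simp [hnone i, hS, sensAt]
  refine ⟨ρ, hcard, ?_⟩
  set g := restrictTo ρ f with hg
  set y₀ : {i : Fin n // ρ i = none} → Bool := fun i => x i.val with hy
  -- completion of y₀ is x
  have hcomp0 : g y₀ = f x := by
    rw [hg, restrictTo]
    congr 1
    funext i
    by_cases h : ρ i = none
    · simp [h, hy]
    · have hi : i ∉ S := fun hmem => h ((hnone i).mpr hmem)
      have : ρ i = some (x i) := by simp [hρ, hi]
      simp [h, this]
  -- flipping a free coordinate corresponds to flipping it in x
  have hcomp1 : ∀ i : {i : Fin n // ρ i = none},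
      g (flipOne i y₀) = f (flipOne i.val x) := by
    rintro ⟨iv, hiv⟩
    rw [hg, restrictTo]
    congr 1
    funext j
    by_cases h : ρ j = none
    · rw [dif_pos h]
      by_cases hji : j = iv
      · subst hji
        have he : (⟨j, h⟩ : {i : Fin n // ρ i = none}) = ⟨j, hiv⟩ := rfl
        simp [flipOne, he, hy]
      · have hne : (⟨j, h⟩ : {i : Fin n // ρ i = none}) ≠ ⟨iv, hiv⟩ :=
          fun hE => hji (congrArg Subtype.val hE)
        simp [flipOne, Function.update_of_ne hne, Function.update_of_ne hji, hy]
    · rw [dif_neg h]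
      have hji : j ≠ iv := fun hE => h (hE ▸ hiv)
      have hi : j ∉ S := fun hmem => h ((hnone j).mpr hmem)
      have hsome : ρ j = some (x j) := by simp [hρ, hi]
      simp [hsome, flipOne, Function.update_of_ne hji]
  -- every free coordinate is sensitive for g at y₀
  have hsens : sensF f ≤ sensAt g y₀ := by
    rw [← hcard, sensAt]
    have huniv : (Finset.univ.filter fun i : {i : Fin n // ρ i = none} =>
        g (flipOne i y₀) ≠ g y₀) = Finset.univ := by
      ext i
      simp only [Finset.mem_filter, Finset.mem_univ, true_and, iff_true]
      rw [hcomp0, hcomp1]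
      have hmem : i.val ∈ S := (hnone i.val).mp i.2
      rw [hS, Finset.mem_filter] at hmem
      exact hmem.2
    rw [huniv, Finset.card_univ]
  have hle : sensF f ≤ bsF g := le_trans hsens (sensAt_le_bsF g y₀)
  -- the real-number chain
  have h1 : (bsF f : ℝ) ≤ c * (sensF f : ℝ) ^ 2 := H n f
  have hs0 : (0:ℝ) ≤ (sensF f : ℝ) := Nat.cast_nonneg _
  have h2 : Real.sqrt (bsF f) ≤ Real.sqrt c * (sensF f : ℝ) := by
    calc Real.sqrt (bsF f) ≤ Real.sqrt (c * (sensF f : ℝ) ^ 2) := Real.sqrt_le_sqrt h1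
    _ = Real.sqrt c * (sensF f : ℝ) := by
        rw [Real.sqrt_mul hc.le, Real.sqrt_sq hs0]
  calc (Real.sqrt c)⁻¹ * Real.sqrt (bsF f)
      ≤ (Real.sqrt c)⁻¹ * (Real.sqrt c * (sensF f : ℝ)) := by
        exact mul_le_mul_of_nonneg_left h2 (inv_nonneg.mpr hsc.le)
    _ = (sensF f : ℝ) := by field_simp
    _ ≤ (bsF g : ℝ) := Nat.cast_le.mpr hle
end

section
/- For every monotone Boolean function f, sensitivity, block sensitivity, and certificate complexity coincide: s(f) = bs(f) = C(f). Consequently, block sensitivity and certificate complexity condense exactly for monotone functions: restricting to the s(f) sensitive coordinates of a sensitivity-maximizing input preserves the measure exactly. -/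
section Aux
variable {I : Type*} [Fintype I] [DecidableEq I]

lemma isCert_univ (f : (I → Bool) → Bool) (x : I → Bool) : IsCert f x Finset.univ := by
  intro y hy
  have : y = x := funext fun i => hy i (Finset.mem_univ i)
  rw [this]

lemma certAt_le_card (f : (I → Bool) → Bool) (x : I → Bool) :
    certAt f x ≤ Fintype.card I := by
  apply Nat.sInf_le
  exact ⟨Finset.univ, isCert_univ f x, Finset.card_univ⟩

lemma sensAt_le_card (f : (I → Bool) → Bool) (x : I → Bool) :
    sensAt f x ≤ Fintype.card I := by
  classical
  exact le_trans (Finset.card_le_card (Finset.filter_subset _ _)) (le_of_eq Finset.card_univ)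

lemma bddAbove_sens (f : (I → Bool) → Bool) : BddAbove (Set.range (sensAt f)) :=
  ⟨Fintype.card I, by rintro _ ⟨x, rfl⟩; exact sensAt_le_card f x⟩

lemma bddAbove_cert (f : (I → Bool) → Bool) : BddAbove (Set.range (certAt f)) :=
  ⟨Fintype.card I, by rintro _ ⟨x, rfl⟩; exact certAt_le_card f x⟩

lemma sensAt_le_sensF (f : (I → Bool) → Bool) (x : I → Bool) : sensAt f x ≤ sensF f :=
  le_csSup (bddAbove_sens f) ⟨x, rfl⟩

lemma certAt_le_certF (f : (I → Bool) → Bool) (x : I → Bool) : certAt f x ≤ certF f :=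
  le_csSup (bddAbove_cert f) ⟨x, rfl⟩

lemma sensBlocks_le_certAt {f : (I → Bool) → Bool} {x : I → Bool} {m : ℕ}
    (h : SensBlocks f x m) : m ≤ certAt f x := by
  classical
  have hne : {m | ∃ S : Finset I, IsCert f x S ∧ S.card = m}.Nonempty :=
    ⟨Fintype.card I, Finset.univ, isCert_univ f x, Finset.card_univ⟩
  rw [certAt]
  apply le_csInf hne
  rintro b ⟨S, hS, rfl⟩
  obtain ⟨B, hdisj, hsens⟩ := h
  have hint : ∀ a : Fin m, ∃ i, i ∈ B a ∩ S := by
    intro a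
    by_contra hc
    push_neg at hc
    have hdBS : ∀ i ∈ S, flipSet (B a) x i = x i := by
      intro i hi
      have : i ∉ B a := fun hib => hc i (Finset.mem_inter.2 ⟨hib, hi⟩)
      simp [flipSet, this]
    exact hsens a (hS _ hdBS)
  choose g hg using hint
  have hgS : ∀ a, g a ∈ S := fun a => (Finset.mem_inter.1 (hg a)).2
  have hgB : ∀ a, g a ∈ B a := fun a => (Finset.mem_inter.1 (hg a)).1
  have hginj : Function.Injective g := by
    intro a b hab
    by_contra hne
    exact absurd ((hdisj a b hne).le_bot (Finset.mem_inter.2 ⟨hgB a, hab ▸ hgB b⟩))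
      (Finset.notMem_empty _)
  calc m = Fintype.card (Fin m) := (Fintype.card_fin m).symm
    _ ≤ S.card := le_trans (Fintype.card_le_of_injective (fun a => (⟨g a, hgS a⟩ : S))
        (fun a b hab => hginj (Subtype.ext_iff.1 hab))) (Fintype.card_coe S).le

lemma sensBlocks_sensAt (f : (I → Bool) → Bool) (x : I → Bool) :
    SensBlocks f x (sensAt f x) := by
  classical
  set s := Finset.univ.filter fun i => f (flipOne i x) ≠ f x with hs
  refine ⟨fun a => {((s.equivFin.symm a : s) : I)}, ?_, ?_⟩
  · intro a b hab
    rw [Finset.disjoint_singleton]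
    intro hc
    exact hab (s.equivFin.symm.injective (Subtype.ext hc))
  · intro a
    rw [flipSet_singleton]
    have := (s.equivFin.symm a).2
    exact (Finset.mem_filter.1 this).2

lemma monotone_certAt_le_sensF {f : (I → Bool) → Bool}
    (hmono : ∀ x y : I → Bool, (∀ i, x i ≤ y i) → f x ≤ f y) (x : I → Bool) :
    certAt f x ≤ sensF f := by
  classical
  by_cases hfx : f x = true
  · -- minimal certificate among subsets of the ones of x
    set P : Finset I → Prop := fun S => (∀ i ∈ S, x i = true) ∧ IsCert f x S with hP
    have hPones : P (Finset.univ.filter fun i => x i = true) := by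
      constructor
      · intro i hi; exact (Finset.mem_filter.1 hi).2
      · intro y hy
        rw [hfx]
        refine Bool.le_iff_imp.1 (hmono x y ?_) hfx
        intro i
        by_cases hxi : x i = true
        · rw [hy i (Finset.mem_filter.2 ⟨Finset.mem_univ i, hxi⟩)]
        · simp [Bool.eq_false_iff.2 hxi]
    set T : Set ℕ := {c | ∃ S, P S ∧ S.card = c} with hT
    have hTne : T.Nonempty := ⟨_, _, hPones, rfl⟩
    obtain ⟨S, hPS, hScard⟩ := Nat.sInf_mem hTne
    have hcert : certAt f x ≤ S.card := by
      apply Nat.sInf_le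
      exact ⟨S, hPS.2, rfl⟩
    -- z : indicator of S
    set z : I → Bool := fun i => decide (i ∈ S) with hz
    have hfz : f z = true := by
      rw [← hfx]
      apply hPS.2
      intro i hi
      rw [hz]; simp [hi, hPS.1 i hi]
    have hsensz : ∀ i ∈ S, f (flipOne i z) ≠ f z := by
      intro i hi
      have herase : ¬ IsCert f x (S.erase i) := by
        intro hc
        have : S.card - 1 ∈ T := ⟨S.erase i, ⟨fun j hj => hPS.1 j (S.erase_subset i hj), hc⟩,
          by rw [Finset.card_erase_of_mem hi]⟩
        have h1 := Nat.sInf_le this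
        have h2 : 0 < S.card := Finset.card_pos.2 ⟨i, hi⟩
        omega
      obtain ⟨y, hy, hfy⟩ : ∃ y, (∀ j ∈ S.erase i, y j = x j) ∧ f y ≠ f x := by
        by_contra hc
        push_neg at hc
        exact herase fun y hy => hc y hy
      have hfy' : f y = false := by
        cases hyv : f y with
        | false => rfl
        | true => exact absurd (hyv.trans hfx.symm) hfy
      have hle : ∀ j, flipOne i z j ≤ y j := by
        intro j
        by_cases hji : j = i
        · subst hji
          simp [flipOne, Function.update, hz, hi]
        · rw [flipOne, Function.update_of_ne hji]
          by_cases hjS : j ∈ S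
          · have hyj : y j = true := (hy j (Finset.mem_erase.2 ⟨hji, hjS⟩)).trans (hPS.1 j hjS)
            rw [hyj]
            exact Bool.le_true _
          · rw [hz]; simp [hjS]
      have := hmono _ _ hle
      rw [hfy'] at this
      rw [hfz]
      intro hc
      rw [hc] at this
      exact absurd this (by simp)
    have hsub : S ⊆ Finset.univ.filter fun i => f (flipOne i z) ≠ f z := by
      intro i hi
      exact Finset.mem_filter.2 ⟨Finset.mem_univ i, hsensz i hi⟩
    calc certAt f x ≤ S.card := hcert
      _ ≤ sensAt f z := Finset.card_le_card hsub
      _ ≤ sensF f := sensAt_le_sensF f z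
  · have hfx' : f x = false := Bool.eq_false_iff.2 hfx
    set P : Finset I → Prop := fun S => (∀ i ∈ S, x i = false) ∧ IsCert f x S with hP
    have hPzeros : P (Finset.univ.filter fun i => x i = false) := by
      constructor
      · intro i hi; exact (Finset.mem_filter.1 hi).2
      · intro y hy
        rw [hfx']
        refine Bool.eq_false_iff.2 fun hyv => hfx (Bool.le_iff_imp.1 (hmono y x ?_) hyv)
        intro i
        by_cases hxi : x i = false
        · rw [hy i (Finset.mem_filter.2 ⟨Finset.mem_univ i, hxi⟩), hxi]
        · have hxi' : x i = true := by revert hxi; cases x i <;> simp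
          rw [hxi']; exact Bool.le_true _
    set T : Set ℕ := {c | ∃ S, P S ∧ S.card = c} with hT
    have hTne : T.Nonempty := ⟨_, _, hPzeros, rfl⟩
    obtain ⟨S, hPS, hScard⟩ := Nat.sInf_mem hTne
    have hcert : certAt f x ≤ S.card := Nat.sInf_le ⟨S, hPS.2, rfl⟩
    set z : I → Bool := fun i => decide (i ∉ S) with hz
    have hfz : f z = false := by
      rw [← hfx']
      apply hPS.2
      intro i hi
      rw [hz]; simp [hi, hPS.1 i hi]
    have hsensz : ∀ i ∈ S, f (flipOne i z) ≠ f z := by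
      intro i hi
      have herase : ¬ IsCert f x (S.erase i) := by
        intro hc
        have : S.card - 1 ∈ T := ⟨S.erase i, ⟨fun j hj => hPS.1 j (S.erase_subset i hj), hc⟩,
          by rw [Finset.card_erase_of_mem hi]⟩
        have h1 := Nat.sInf_le this
        have h2 : 0 < S.card := Finset.card_pos.2 ⟨i, hi⟩
        omega
      obtain ⟨y, hy, hfy⟩ : ∃ y, (∀ j ∈ S.erase i, y j = x j) ∧ f y ≠ f x := by
        by_contra hc
        push_neg at hc
        exact herase fun y hy => hc y hy
      have hfy' : f y = true := by
        cases hyv : f y with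
        | true => rfl
        | false => exact absurd (hyv.trans hfx'.symm) hfy
      have hle : ∀ j, y j ≤ flipOne i z j := by
        intro j
        by_cases hji : j = i
        · subst hji
          simp [flipOne, Function.update, hz, hi]
        · rw [flipOne, Function.update_of_ne hji]
          by_cases hjS : j ∈ S
          · rw [hy j (Finset.mem_erase.2 ⟨hji, hjS⟩), hPS.1 j hjS]
            simp
          · rw [hz]; simp [hjS]
      have := hmono _ _ hle
      rw [hfy'] at this
      rw [hfz]
      intro hc
      rw [hc] at this
      exact absurd this (by simp)
    have hsub : S ⊆ Finset.univ.filter fun i => f (flipOne i z) ≠ f z := by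
      intro i hi
      exact Finset.mem_filter.2 ⟨Finset.mem_univ i, hsensz i hi⟩
    calc certAt f x ≤ S.card := hcert
      _ ≤ sensAt f z := Finset.card_le_card hsub
      _ ≤ sensF f := sensAt_le_sensF f z

lemma bddAbove_bs (f : (I → Bool) → Bool) : BddAbove {m | ∃ x, SensBlocks f x m} :=
  ⟨Fintype.card I, by
    rintro m ⟨x, hx⟩
    exact le_trans (sensBlocks_le_certAt hx) (certAt_le_card f x)⟩

lemma monotone_sens_bs_cert {f : (I → Bool) → Bool}
    (hmono : ∀ x y : I → Bool, (∀ i, x i ≤ y i) → f x ≤ f y) :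
    sensF f = bsF f ∧ bsF f = certF f := by
  have h1 : sensF f ≤ bsF f := by
    apply csSup_le (Set.range_nonempty _)
    rintro _ ⟨x, rfl⟩
    exact le_csSup (bddAbove_bs f) ⟨x, sensBlocks_sensAt f x⟩
  have h2 : bsF f ≤ certF f := by
    have hne : {m | ∃ x, SensBlocks f x m}.Nonempty :=
      ⟨0, fun _ => false, ⟨fun a => a.elim0, fun a b _ => a.elim0, fun a => a.elim0⟩⟩
    apply csSup_le hne
    rintro m ⟨x, hx⟩
    exact le_trans (sensBlocks_le_certAt hx) (certAt_le_certF f x)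
  have h3 : certF f ≤ sensF f := by
    apply csSup_le (Set.range_nonempty _)
    rintro _ ⟨x, rfl⟩
    exact monotone_certAt_le_sensF hmono x
  omega

end Aux

/-- for monotone Boolean functions, sensitivity, block sensitivity and
certificate complexity coincide, and consequently block sensitivity and certificate
complexity condense exactly: some restriction to `s(f)` free variables preserves them. -/
theorem stmt19 (n : ℕ) (f : (Fin n → Bool) → Bool)
    (hmono : ∀ x y : Fin n → Bool, (∀ i, x i ≤ y i) → f x ≤ f y) :
    sensF f = bsF f ∧ bsF f = certF f ∧
    ∃ ρ : Fin n → Option Bool,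
      Fintype.card {i : Fin n // ρ i = none} = sensF f ∧
      bsF (restrictTo ρ f) = bsF f ∧ certF (restrictTo ρ f) = certF f := by
  classical
  have hfeq := monotone_sens_bs_cert hmono
  refine ⟨hfeq.1, hfeq.2, ?_⟩
  obtain ⟨x, hx⟩ : sensF f ∈ Set.range (sensAt f) :=
    Nat.sSup_mem (Set.range_nonempty _) (bddAbove_sens f)
  set S : Finset (Fin n) := Finset.univ.filter fun i => f (flipOne i x) ≠ f x with hS
  set ρ : Fin n → Option Bool := (fun i => if i ∈ S then none else some (x i)) with hρ
  have hρnone : ∀ i, ρ i = none ↔ i ∈ S := by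
    intro i; by_cases h : i ∈ S <;> simp [hρ, h]
  set g := restrictTo ρ f with hg
  set ext : ({i : Fin n // ρ i = none} → Bool) → (Fin n → Bool) :=
    (fun y i => if h : ρ i = none then y ⟨i, h⟩ else (ρ i).getD false) with hext
  have hgext : ∀ y, g y = f (ext y) := fun y => rfl
  have hgmono : ∀ y y', (∀ j, y j ≤ y' j) → g y ≤ g y' := by
    intro y y' h
    rw [hgext, hgext]
    apply hmono
    intro i
    by_cases hi : ρ i = none
    · simp only [hext, hi, dif_pos]; exact h _
    · simp only [hext, hi, dif_neg, not_false_iff]; exact le_refl _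
  have hmain := monotone_sens_bs_cert hgmono
  have hexty : ext (fun j => x j.val) = x := by
    funext i
    by_cases h : ρ i = none
    · simp [hext, h]
    · have hiS : i ∉ S := fun hiS => h ((hρnone i).2 hiS)
      simp [hext, h, hρ, hiS]
  have hfilterS : (Finset.univ.filter fun i => ρ i = none) = S := by
    ext i
    simp [Finset.mem_filter, hρnone i]
  have hcard : Fintype.card {i : Fin n // ρ i = none} = sensF f := by
    rw [Fintype.card_subtype, hfilterS, ← hx]
    rfl
  have hystar : sensF f ≤ sensAt g (fun j => x j.val) := by
    rw [sensAt]
    have hall : (Finset.univ.filter fun j : {i : Fin n // ρ i = none} =>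
        g (flipOne j (fun j => x j.val)) ≠ g (fun j => x j.val)) = Finset.univ := by
      rw [Finset.filter_eq_self]
      intro j _
      have hjS : (j : Fin n) ∈ S := (hρnone j.val).1 j.2
      have hflip : ext (flipOne j (fun j => x j.val)) = flipOne (j : Fin n) x := by
        funext i
        by_cases h : ρ i = none
        · simp only [hext, h, dif_pos, flipOne, Function.update]
          by_cases hij : i = (j : Fin n)
          · have : (⟨i, h⟩ : {i : Fin n // ρ i = none}) = j := Subtype.ext hij
            simp [this, hij]
          · have : (⟨i, h⟩ : {i : Fin n // ρ i = none}) ≠ j :=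
              fun c => hij (congrArg Subtype.val c)
            simp [this, hij]
        · have hiS : i ∉ S := fun c => h ((hρnone i).2 c)
          have hij : i ≠ (j : Fin n) := fun e => h (e ▸ j.2)
          have hupd : flipOne (↑j) x i = x i := Function.update_of_ne hij _ _
          rw [hupd]
          simp [hext, h, hρ, hiS]
      rw [hgext, hgext, hflip, hexty]
      exact (Finset.mem_filter.1 hjS).2
    rw [hall, Finset.card_univ, hcard]
  have hbsle : bsF g ≤ bsF f := by
    have hne : {m | ∃ y, SensBlocks g y m}.Nonempty :=
      ⟨0, fun _ => false, ⟨fun a => a.elim0, fun a b _ => a.elim0, fun a => a.elim0⟩⟩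
    apply csSup_le hne
    rintro m ⟨y, B, hdisj, hsens⟩
    apply le_csSup (bddAbove_bs f)
    refine ⟨ext y, fun a => (B a).map ⟨Subtype.val, Subtype.val_injective⟩, ?_, ?_⟩
    · intro a b hab
      rw [Finset.disjoint_map]
      exact hdisj a b hab
    · intro a
      have hkey : flipSet ((B a).map ⟨Subtype.val, Subtype.val_injective⟩) (ext y)
          = ext (flipSet (B a) y) := by
        funext i
        by_cases h : ρ i = none
        · have hmem : i ∈ (B a).map ⟨Subtype.val, Subtype.val_injective⟩ ↔
              (⟨i, h⟩ : {i : Fin n // ρ i = none}) ∈ B a := by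
            constructor
            · intro hm
              obtain ⟨b, hb, hbv⟩ := Finset.mem_map.1 hm
              cases hbv
              simpa using hb
            · intro hb; exact Finset.mem_map_of_mem _ hb
          by_cases hB : (⟨i, h⟩ : {i : Fin n // ρ i = none}) ∈ B a <;>
            simp [flipSet, hext, h, hmem, hB]
        · have hnm : i ∉ (B a).map ⟨Subtype.val, Subtype.val_injective⟩ := by
            intro hm
            obtain ⟨b, _, hbv⟩ := Finset.mem_map.1 hm
            exact h (hbv ▸ b.2)
          simp [flipSet, hext, h, hnm]
      rw [hkey]
      exact fun c => hsens a ((hgext _).trans (c.trans (hgext _).symm))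
  have hbseq : bsF g = bsF f := by
    refine le_antisymm hbsle ?_
    calc bsF f = sensF f := hfeq.1.symm
      _ ≤ sensAt g (fun j => x j.val) := hystar
      _ ≤ sensF g := sensAt_le_sensF g _
      _ = bsF g := hmain.1
  have hceq : certF g = certF f := by
    rw [← hmain.2, hbseq, hfeq.2]
  exact ⟨ρ, hcard, hbseq, hceq⟩
end
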